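/- arXiv:1501.01120 — 7 statements merged into one kernel-verified Lean document; each statement's English description precedes it below -/
import Mathlib

section
/- If k and j are non-negative integers with j ≤ 2^k, then either α(j) ≤ ⌈k/2⌉ or α(2^k − j) ≤ ⌈k/2⌉. -/
/-- α(i) is the number of ones in the binary representation of i. -/
def binOnes (i : ℕ) : ℕ := (Nat.digits 2 i).count 1

/-!
Complementing the `k` low bits gives `α(m) + α(2^k - 1 - m) = k` for `m < 2^k`, and
adding one raises `α` by at most one. For `j = i + 1` this yields
`α(j) + α(2^k - j) ≤ α(i) + 1 + α(2^k - 1 - i) = k + 1`, so one of the two summands is at most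
`⌈k/2⌉ = (k + 1) / 2`.
-/

theorem binOnes_two_mul (n : ℕ) : binOnes (2 * n) = binOnes n := by
  rcases n.eq_zero_or_pos with rfl | hn
  · rfl
  · rw [binOnes, Nat.digits_def' one_lt_two (by omega)]
    simp [binOnes]

theorem binOnes_two_mul_add_one (n : ℕ) : binOnes (2 * n + 1) = binOnes n + 1 := by
  rw [binOnes, Nat.digits_def' one_lt_two (by omega)]
  simp [binOnes, Nat.add_div_of_dvd_right]

theorem binOnes_succ_le (n : ℕ) : binOnes (n + 1) ≤ binOnes n + 1 := by
  induction n using Nat.strong_induction_on with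
  | _ n ih =>
  obtain ⟨a, rfl | rfl⟩ := Nat.even_or_odd' n
  · rw [binOnes_two_mul_add_one, binOnes_two_mul]
  · rw [show 2 * a + 1 + 1 = 2 * (a + 1) by ring, binOnes_two_mul, binOnes_two_mul_add_one]
    have := ih a (by omega)
    omega

theorem binOnes_add_binOnes_two_pow_sub_one_sub {k m : ℕ} (hm : m < 2 ^ k) :
    binOnes m + binOnes (2 ^ k - 1 - m) = k := by
  induction k generalizing m with
  | zero =>
    obtain rfl : m = 0 := by simpa using hm
    rfl
  | succ k ih =>
    rw [pow_succ] at hm ⊢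
    obtain ⟨a, rfl | rfl⟩ := Nat.even_or_odd' m
    · rw [show 2 ^ k * 2 - 1 - 2 * a = 2 * (2 ^ k - 1 - a) + 1 by omega,
        binOnes_two_mul, binOnes_two_mul_add_one, ← add_assoc, ih (by omega)]
    · rw [show 2 ^ k * 2 - 1 - (2 * a + 1) = 2 * (2 ^ k - 1 - a) by omega,
        binOnes_two_mul, binOnes_two_mul_add_one, add_right_comm, ih (by omega)]

theorem binOnes_add_binOnes_two_pow_sub_le {k j : ℕ} (hj : j ≤ 2 ^ k) :
    binOnes j + binOnes (2 ^ k - j) ≤ k + 1 := by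
  have hpos := Nat.two_pow_pos k
  rcases j with _ | i
  · have hcompl := binOnes_add_binOnes_two_pow_sub_one_sub hpos
    have hsucc := binOnes_succ_le (2 ^ k - 1)
    rw [Nat.sub_add_cancel hpos] at hsucc
    simp only [Nat.sub_zero] at hcompl ⊢
    omega
  · have hcompl := binOnes_add_binOnes_two_pow_sub_one_sub (k := k) (m := i) (by omega)
    have hsucc := binOnes_succ_le i
    rw [show 2 ^ k - (i + 1) = 2 ^ k - 1 - i by omega]
    omega

theorem stmt_2 (k j : ℕ) (hj : j ≤ 2 ^ k) :
    binOnes j ≤ (k + 1) / 2 ∨ binOnes (2 ^ k - j) ≤ (k + 1) / 2 := by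
  have := binOnes_add_binOnes_two_pow_sub_le hj
  omega
end

section
/- For every j with 0 ≤ j ≤ 2^k, the initial segment {0, …, j−1} or its complement {j, …, 2^k−1} in {0, …, 2^k−1} can be written as a union of at most ⌈k/2⌉ dyadic intervals. -/
/-- A dyadic interval of {0, …, 2^k − 1}. -/
def IsDyadic (k : ℕ) (D : Finset ℕ) : Prop :=
  ∃ m s : ℕ, (m + 1) * 2 ^ s ≤ 2 ^ k ∧ D = Finset.Ico (m * 2 ^ s) ((m + 1) * 2 ^ s)

/-!
Split `{0, …, 2^(k+1) − 1}` into its two halves. If `j ≤ 2^k`, the initial segment `[0, j)` is the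
one of level `k`, and its complement gains the upper half as one extra dyadic interval; if
`j ≥ 2^k`, the complement is a translate of the one of level `k` and the initial segment gains the
lower half. By induction the two segments together need at most `k + 1` dyadic intervals, so the
smaller of the two needs at most `⌊(k + 1)/2⌋ = ⌈k/2⌉`.
-/

def IsDyadicUnion (k c : ℕ) (S : Finset ℕ) : Prop :=
  ∃ I : Fin c → Finset ℕ, (∀ a, IsDyadic k (I a)) ∧ Finset.univ.biUnion I = S

namespace IsDyadic

variable {k : ℕ} {D : Finset ℕ}

lemma mono {k' : ℕ} (h : IsDyadic k D) (hk : k ≤ k') : IsDyadic k' D := by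
  obtain ⟨m, s, hle, rfl⟩ := h
  exact ⟨m, s, hle.trans (Nat.pow_le_pow_right two_pos hk), rfl⟩

lemma image_add_two_pow (h : IsDyadic k D) : IsDyadic (k + 1) (D.image (· + 2 ^ k)) := by
  obtain ⟨m, s, hle, rfl⟩ := h
  have hs : s ≤ k :=
    (Nat.pow_le_pow_iff_right one_lt_two).mp ((Nat.le_mul_of_pos_left _ m.succ_pos).trans hle)
  have hk : 2 ^ k = 2 ^ (k - s) * 2 ^ s := by rw [← pow_add, Nat.sub_add_cancel hs]
  refine ⟨m + 2 ^ (k - s), s, ?_, ?_⟩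
  · rw [pow_succ]
    nlinarith
  · rw [Finset.image_add_right_Ico, hk]
    ring_nf

end IsDyadic

lemma isDyadic_range_two_pow (k : ℕ) : IsDyadic k (Finset.range (2 ^ k)) :=
  ⟨0, k, by simp, by rw [Finset.range_eq_Ico]; simp⟩

lemma isDyadic_Ico_two_pow_two_pow_succ (k : ℕ) :
    IsDyadic (k + 1) (Finset.Ico (2 ^ k) (2 ^ (k + 1))) :=
  ⟨1, k, by rw [pow_succ]; omega, by rw [pow_succ]; ring_nf⟩

namespace IsDyadicUnion

variable {k c : ℕ} {S : Finset ℕ}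

lemma empty (k : ℕ) : IsDyadicUnion k 0 ∅ :=
  ⟨Fin.elim0, fun a => a.elim0, by simp⟩

lemma union_dyadic {D : Finset ℕ} (h : IsDyadicUnion k c S) (hD : IsDyadic k D) :
    IsDyadicUnion k (c + 1) (D ∪ S) := by
  obtain ⟨I, hI, rfl⟩ := h
  refine ⟨Fin.cons D I, Fin.cases hD hI, ?_⟩
  ext x
  simp [Fin.exists_fin_succ]

lemma of_isDyadic {D : Finset ℕ} (hD : IsDyadic k D) : IsDyadicUnion k 1 D := by
  simpa using (empty k).union_dyadic hD

lemma mono {k' : ℕ} (h : IsDyadicUnion k c S) (hk : k ≤ k') : IsDyadicUnion k' c S := by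
  obtain ⟨I, hI, rfl⟩ := h
  exact ⟨I, fun a => (hI a).mono hk, rfl⟩

lemma image_add_two_pow (h : IsDyadicUnion k c S) :
    IsDyadicUnion (k + 1) c (S.image (· + 2 ^ k)) := by
  obtain ⟨I, hI, rfl⟩ := h
  exact ⟨fun a => (I a).image (· + 2 ^ k), fun a => (hI a).image_add_two_pow,
    Finset.biUnion_image.symm⟩

end IsDyadicUnion

lemma exists_isDyadicUnion_range_and_Ico (k j : ℕ) (hj : j ≤ 2 ^ k) :
    ∃ c₁ c₂ : ℕ, c₁ + c₂ ≤ k + 1 ∧ IsDyadicUnion k c₁ (Finset.range j) ∧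
      IsDyadicUnion k c₂ (Finset.Ico j (2 ^ k)) := by
  induction k generalizing j with
  | zero =>
    interval_cases j
    · exact ⟨0, 1, le_rfl, by simpa using IsDyadicUnion.empty 0,
        by simpa using IsDyadicUnion.of_isDyadic (isDyadic_range_two_pow 0)⟩
    · exact ⟨1, 0, le_rfl, by simpa using IsDyadicUnion.of_isDyadic (isDyadic_range_two_pow 0),
        by simpa using IsDyadicUnion.empty 0⟩
  | succ k ih =>
    have hk : 2 ^ (k + 1) = 2 ^ k + 2 ^ k := by rw [pow_succ]; ring
    rcases le_total j (2 ^ k) with hlow | hhigh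
    · obtain ⟨c₁, c₂, hc, hS₁, hS₂⟩ := ih j hlow
      have hsplit : Finset.Ico j (2 ^ (k + 1)) =
          Finset.Ico (2 ^ k) (2 ^ (k + 1)) ∪ Finset.Ico j (2 ^ k) := by
        rw [Finset.union_comm, Finset.Ico_union_Ico_eq_Ico hlow (by omega)]
      refine ⟨c₁, c₂ + 1, by omega, hS₁.mono k.le_succ, ?_⟩
      rw [hsplit]
      exact (hS₂.mono k.le_succ).union_dyadic (isDyadic_Ico_two_pow_two_pow_succ k)
    · obtain ⟨c₁, c₂, hc, hS₁, hS₂⟩ := ih (j - 2 ^ k) (by omega)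
      have hsplit : Finset.range j =
          Finset.range (2 ^ k) ∪ (Finset.range (j - 2 ^ k)).image (· + 2 ^ k) := by
        rw [Finset.range_eq_Ico, Finset.range_eq_Ico, Finset.range_eq_Ico,
          Finset.image_add_right_Ico, zero_add, Nat.sub_add_cancel hhigh,
          Finset.Ico_union_Ico_eq_Ico (Nat.zero_le _) hhigh]
      have hshift : Finset.Ico j (2 ^ (k + 1)) =
          (Finset.Ico (j - 2 ^ k) (2 ^ k)).image (· + 2 ^ k) := by
        rw [Finset.image_add_right_Ico, Nat.sub_add_cancel hhigh, hk]
      refine ⟨c₁ + 1, c₂, by omega, ?_, ?_⟩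
      · rw [hsplit]
        exact hS₁.image_add_two_pow.union_dyadic ((isDyadic_range_two_pow k).mono k.le_succ)
      · rw [hshift]
        exact hS₂.image_add_two_pow

theorem stmt_4 (k j : ℕ) (hj : j ≤ 2 ^ k) :
    ∃ c : ℕ, c ≤ (k + 1) / 2 ∧
      ∃ I : Fin c → Finset ℕ, (∀ a, IsDyadic k (I a)) ∧
        (Finset.univ.biUnion I = Finset.range j ∨
         Finset.univ.biUnion I = Finset.Ico j (2 ^ k)) := by
  obtain ⟨c₁, c₂, hc, ⟨I₁, hI₁, hS₁⟩, ⟨I₂, hI₂, hS₂⟩⟩ := exists_isDyadicUnion_range_and_Ico k j hj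
  rcases le_total c₁ c₂ with h | h
  · exact ⟨c₁, by omega, I₁, hI₁, .inl hS₁⟩
  · exact ⟨c₂, by omega, I₂, hI₂, .inr hS₂⟩
end

section
/- Let V₁, …, Vₙ be finite-dimensional vector spaces and t ∈ V₁ ⊗ ⋯ ⊗ Vₙ. Suppose A', A'' ⊆ {1,…,n} are disjoint, t = t' ⊗ t'' ⊗ x where t' ∈ ⊗_{l∈B'} V_l, t'' ∈ ⊗_{l∈B''} V_l for disjoint sets B' ⊇ A', B'' ⊇ A'' with B' ∩ A'' = B'' ∩ A' = ∅, and x is a nonzero simple tensor x = ⊗_{l∉B'∪B''} x_l. If the flattening rank of t' with respect to A' is q' and the flattening rank of t'' with respect to A'' is q'', then the flattening rank of t with respect to A' ∪ A'' ∪ C equals q'·q'' for any subset C ⊆ {1,…,n} \ (B' ∪ B''). -/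
/-- The flattening of a tensor `t ∈ V₁ ⊗ ⋯ ⊗ Vₙ` (given in coordinates, `V_i = 𝕜^{d i}`)
with respect to a subset `S` of the factors: the matrix of the linear map
`(⊗_{l∈S} V_l)* → ⊗_{l∉S} V_l` obtained by contraction with `t`. -/
def flattening {𝕜 : Type*} [Field 𝕜] {ι : Type*} [Fintype ι] [DecidableEq ι]
    (d : ι → ℕ) (S : Finset ι) (t : (∀ i, Fin (d i)) → 𝕜) :
    Matrix (∀ i : {i // i ∈ S}, Fin (d i.1)) (∀ i : {i // i ∉ S}, Fin (d i.1)) 𝕜 :=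
  fun a b => t fun i => if h : i ∈ S then a ⟨i, h⟩ else b ⟨i, h⟩

/-- The flattening rank of a tensor with respect to a subset `S` of the factors. -/
noncomputable def flatteningRank {𝕜 : Type*} [Field 𝕜] {ι : Type*} [Fintype ι] [DecidableEq ι]
    (d : ι → ℕ) (S : Finset ι) (t : (∀ i, Fin (d i)) → 𝕜) : ℕ :=
  (flattening d S t).rank

/-!
Up to a reordering of its rows and columns, the flattening of `t = t' ⊗ t'' ⊗ x` with respect to
`A' ∪ A'' ∪ C` is the Kronecker product of the flattenings of `t'` and `t''` with the matrix
`x_C x_Rᵀ`, where `x_C` and `x_R` are the simple tensors formed by the factors of `x` indexed by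
`C` and by the rest `R = (B' ∪ B'')ᶜ \ C`. This matrix has rank one since `x ≠ 0`, and matrix rank
is multiplicative under Kronecker products because over a field the range of `f ⊗ g` is the
tensor product of the ranges.
-/

open Matrix Kronecker Module

theorem TensorProduct.finrank_range_map {K M N M' N' : Type*} [Field K]
    [AddCommGroup M] [Module K M] [AddCommGroup N] [Module K N]
    [AddCommGroup M'] [Module K M'] [AddCommGroup N'] [Module K N']
    (f : M →ₗ[K] M') (g : N →ₗ[K] N') :
    finrank K (LinearMap.range (map f g)) =
      finrank K (LinearMap.range f) * finrank K (LinearMap.range g) := by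
  have hfactor : map f g =
      mapIncl (LinearMap.range f) (LinearMap.range g) ∘ₗ map f.rangeRestrict g.rangeRestrict := by
    rw [mapIncl, ← map_comp]
    rfl
  rw [hfactor, LinearMap.range_comp, LinearMap.range_eq_top.2
      (map_surjective f.surjective_rangeRestrict g.surjective_rangeRestrict), Submodule.map_top,
    LinearMap.finrank_range_of_inj (Module.Flat.tensorProduct_mapIncl_injective_of_right _ _),
    finrank_tensorProduct]

namespace Matrix
variable {K m n p q : Type*} [Field K]

theorem rank_eq_zero_iff [Fintype n] [DecidableEq n] {A : Matrix m n K} : A.rank = 0 ↔ A = 0 := by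
  rw [rank, Submodule.finrank_eq_zero, LinearMap.range_eq_bot, ← toLin'_apply',
    LinearEquiv.map_eq_zero_iff]

theorem rank_vecMulVec_of_ne_zero [Fintype n] [DecidableEq n] {u : m → K} {w : n → K}
    (hu : u ≠ 0) (hw : w ≠ 0) : (vecMulVec u w).rank = 1 := by
  refine (rank_vecMulVec_le u w).antisymm (Nat.one_le_iff_ne_zero.2 fun h => ?_)
  obtain ⟨i, hi⟩ := Function.ne_iff.1 hu
  obtain ⟨j, hj⟩ := Function.ne_iff.1 hw
  exact mul_ne_zero hi hj congr($(rank_eq_zero_iff.1 h) i j)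

theorem rank_kronecker [Fintype m] [Fintype n] [Fintype p] [Fintype q] [DecidableEq n]
    [DecidableEq q] (A : Matrix m n K) (B : Matrix p q K) : (A ⊗ₖ B).rank = A.rank * B.rank := by
  rw [rank_eq_finrank_range_toLin (A ⊗ₖ B) ((Pi.basisFun K m).tensorProduct (Pi.basisFun K p))
      ((Pi.basisFun K n).tensorProduct (Pi.basisFun K q)),
    toLin_kronecker, TensorProduct.finrank_range_map,
    rank_eq_finrank_range_toLin A (Pi.basisFun K m) (Pi.basisFun K n),
    rank_eq_finrank_range_toLin B (Pi.basisFun K p) (Pi.basisFun K q)]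

end Matrix

section SimpleTensor
variable {ι R : Type*} [Fintype ι] {F : ι → Type*}

def simpleTensor [CommMonoid R] (x : ∀ i, F i → R) (v : ∀ i, F i) : R :=
  ∏ i, x i (v i)

theorem simpleTensor_ne_zero [CommMonoidWithZero R] [NoZeroDivisors R] [Nontrivial R]
    {x : ∀ i, F i → R} (hx : ∀ i, x i ≠ 0) : simpleTensor x ≠ 0 := by
  choose v hv using fun i => Function.ne_iff.1 (hx i)
  exact Function.ne_iff.2 ⟨v, Finset.prod_ne_zero_iff.2 fun i _ => hv i⟩

end SimpleTensor

section Coordinates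
variable {ι : Type*} (F : ι → Type*)

@[simps apply]
def piSubtypeCongrEquiv {p q : ι → Prop} (h : ∀ i, p i ↔ q i) :
    (∀ i : {i // p i}, F i) ≃ ∀ i : {i // q i}, F i where
  toFun f i := f ⟨i, (h i).2 i.2⟩
  invFun g i := g ⟨i, (h i).1 i.2⟩

@[simps apply]
def piSubtypeSubtypeEquiv {p r : ι → Prop} {q : {i // p i} → Prop}
    (h : ∀ i, r i ↔ ∃ hp : p i, q ⟨i, hp⟩) :
    (∀ j : {j : {i // p i} // q j}, F j.1.1) ≃ ∀ i : {i // r i}, F i where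
  toFun f i := f ⟨⟨i, ((h i).1 i.2).1⟩, ((h i).1 i.2).2⟩
  invFun g j := g ⟨j.1, (h j.1).2 ⟨j.1.2, j.2⟩⟩

end Coordinates

section Blocks
variable {ι : Type*} [Fintype ι] [DecidableEq ι] {B' B'' A' A'' C : Finset ι}

theorem mem_blocks_sdiff_iff (hBdisj : Disjoint B' B'') (hA' : A' ⊆ B') (hA'' : A'' ⊆ B'')
    (hC : C ⊆ (B' ∪ B'')ᶜ) (i : ι) :
    i ∈ B' \ A' ∪ B'' \ A'' ∪ (B' ∪ B'')ᶜ \ C ↔ i ∉ A' ∪ A'' ∪ C := by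
  have := @hA' i; have := @hA'' i; have := @hC i; have := @Finset.disjoint_left.1 hBdisj i
  simp only [Finset.mem_union, Finset.mem_sdiff, Finset.mem_compl] at *
  tauto

variable (d : ι → ℕ) (hBdisj : Disjoint B' B'') (hA' : A' ⊆ B') (hA'' : A'' ⊆ B'')
  (hC : C ⊆ (B' ∪ B'')ᶜ)

def rowEquiv :
    ((∀ j : {j : {i // i ∈ B'} // j ∈ A'.subtype (· ∈ B')}, Fin (d j.1.1)) ×
      (∀ j : {j : {i // i ∈ B''} // j ∈ A''.subtype (· ∈ B'')}, Fin (d j.1.1))) ×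
      (∀ j : {j // j ∈ C}, Fin (d j.1)) ≃ ∀ i : {i // i ∈ A' ∪ A'' ∪ C}, Fin (d i.1) :=
  (Equiv.prodCongrLeft fun _ =>
    (piSubtypeSubtypeEquiv (fun i => Fin (d i)) (q := (· ∈ A'.subtype (· ∈ B'))) (r := (· ∈ A'))
        (by simpa using fun i h => hA' h)).prodCongr
      (piSubtypeSubtypeEquiv (fun i => Fin (d i)) (q := (· ∈ A''.subtype (· ∈ B'')))
        (r := (· ∈ A'')) (by simpa using fun i h => hA'' h))).trans <|
  (Equiv.prodCongrLeft fun _ => Equiv.piFinsetUnion (fun i => Fin (d i))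
    (hBdisj.mono hA' hA'')).trans <|
  Equiv.piFinsetUnion (fun i => Fin (d i)) <|
    (Finset.subset_compl_iff_disjoint_right.1 hC).symm.mono_left
      (Finset.union_subset_union hA' hA'')

def colEquiv :
    ((∀ j : {j : {i // i ∈ B'} // j ∉ A'.subtype (· ∈ B')}, Fin (d j.1.1)) ×
      (∀ j : {j : {i // i ∈ B''} // j ∉ A''.subtype (· ∈ B'')}, Fin (d j.1.1))) ×
      (∀ j : {j // j ∈ (B' ∪ B'')ᶜ \ C}, Fin (d j.1)) ≃
      ∀ i : {i // i ∉ A' ∪ A'' ∪ C}, Fin (d i.1) :=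
  (Equiv.prodCongrLeft fun _ =>
    (piSubtypeSubtypeEquiv (fun i => Fin (d i)) (q := (· ∉ A'.subtype (· ∈ B')))
        (r := (· ∈ B' \ A')) (by simp)).prodCongr
      (piSubtypeSubtypeEquiv (fun i => Fin (d i)) (q := (· ∉ A''.subtype (· ∈ B'')))
        (r := (· ∈ B'' \ A'')) (by simp))).trans <|
  (Equiv.prodCongrLeft fun _ => Equiv.piFinsetUnion (fun i => Fin (d i))
    (hBdisj.mono Finset.sdiff_subset Finset.sdiff_subset)).trans <|
  (Equiv.piFinsetUnion (fun i => Fin (d i)) <| disjoint_compl_right.mono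
    (Finset.union_subset_union Finset.sdiff_subset Finset.sdiff_subset)
    Finset.sdiff_subset).trans <|
  piSubtypeCongrEquiv (fun i => Fin (d i)) (mem_blocks_sdiff_iff hBdisj hA' hA'' hC)

variable {d hBdisj hA' hA'' hC}

theorem rowEquiv_apply_of_mem_left {r} {i : ι} (hi : i ∈ A') (hS : i ∈ A' ∪ A'' ∪ C) :
    rowEquiv d hBdisj hA' hA'' hC r ⟨i, hS⟩ = r.1.1 ⟨⟨i, hA' hi⟩, by simpa⟩ := by
  simp [rowEquiv, Equiv.piFinsetUnion_left _ _ (Finset.mem_union_left _ hi),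
    Equiv.piFinsetUnion_left _ _ hi]

theorem rowEquiv_apply_of_mem_middle {r} {i : ι} (hi : i ∈ A'') (hS : i ∈ A' ∪ A'' ∪ C) :
    rowEquiv d hBdisj hA' hA'' hC r ⟨i, hS⟩ = r.1.2 ⟨⟨i, hA'' hi⟩, by simpa⟩ := by
  simp [rowEquiv, Equiv.piFinsetUnion_left _ _ (Finset.mem_union_right _ hi),
    Equiv.piFinsetUnion_right _ _ hi]

theorem rowEquiv_apply_of_mem_right {r} {i : ι} (hi : i ∈ C) (hS : i ∈ A' ∪ A'' ∪ C) :
    rowEquiv d hBdisj hA' hA'' hC r ⟨i, hS⟩ = r.2 ⟨i, hi⟩ := by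
  simp [rowEquiv, Equiv.piFinsetUnion_right _ _ hi]

theorem colEquiv_apply_of_mem_left {c} {i : ι} (hi : i ∈ B') (hS : i ∉ A' ∪ A'' ∪ C) :
    colEquiv d hBdisj hA' hA'' hC c ⟨i, hS⟩ = c.1.1 ⟨⟨i, hi⟩, by simp_all⟩ := by
  have hi' : i ∈ B' \ A' := by simp_all
  simp [colEquiv, Equiv.piFinsetUnion_left _ _ (Finset.mem_union_left _ hi'),
    Equiv.piFinsetUnion_left _ _ hi']

theorem colEquiv_apply_of_mem_middle {c} {i : ι} (hi : i ∈ B'') (hS : i ∉ A' ∪ A'' ∪ C) :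
    colEquiv d hBdisj hA' hA'' hC c ⟨i, hS⟩ = c.1.2 ⟨⟨i, hi⟩, by simp_all⟩ := by
  have hi' : i ∈ B'' \ A'' := by simp_all
  simp [colEquiv, Equiv.piFinsetUnion_left _ _ (Finset.mem_union_right _ hi'),
    Equiv.piFinsetUnion_right _ _ hi']

theorem colEquiv_apply_of_mem_right {c} {i : ι} (hi : i ∈ (B' ∪ B'')ᶜ \ C)
    (hS : i ∉ A' ∪ A'' ∪ C) : colEquiv d hBdisj hA' hA'' hC c ⟨i, hS⟩ = c.2 ⟨i, hi⟩ := by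
  simp [colEquiv, Equiv.piFinsetUnion_right _ _ hi]

theorem flattening_submatrix_eq_kronecker {𝕜 : Type*} [Field 𝕜]
    (t' : (∀ i : {i // i ∈ B'}, Fin (d i.1)) → 𝕜) (t'' : (∀ i : {i // i ∈ B''}, Fin (d i.1)) → 𝕜)
    (x : ∀ i, Fin (d i) → 𝕜) :
    (flattening d (A' ∪ A'' ∪ C) fun v =>
      t' (fun i => v i.1) * t'' (fun i => v i.1) * ∏ i ∈ (B' ∪ B'')ᶜ, x i (v i)).submatrix
        (rowEquiv d hBdisj hA' hA'' hC) (colEquiv d hBdisj hA' hA'' hC) =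
      (flattening _ (A'.subtype (· ∈ B')) t' ⊗ₖ flattening _ (A''.subtype (· ∈ B'')) t'') ⊗ₖ
        vecMulVec (simpleTensor fun j : {j // j ∈ C} => x j)
          (simpleTensor fun j : {j // j ∈ (B' ∪ B'')ᶜ \ C} => x j) := by
  have hblocks := mem_blocks_sdiff_iff hBdisj hA' hA'' hC
  have hSB' : ∀ i ∈ B', i ∈ A' ∪ A'' ∪ C ↔ i ∈ A' := fun i hi => by
    rw [← not_iff_not, ← hblocks]
    simp [hi, Finset.disjoint_left.1 hBdisj hi]
  have hSB'' : ∀ i ∈ B'', i ∈ A' ∪ A'' ∪ C ↔ i ∈ A'' := fun i hi => by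
    rw [← not_iff_not, ← hblocks]
    simp [hi, Finset.disjoint_right.1 hBdisj hi]
  ext ⟨⟨a', a''⟩, c⟩ ⟨⟨b', b''⟩, e⟩
  simp only [flattening, submatrix_apply, kroneckerMap_apply, vecMulVec_apply, simpleTensor]
  refine congrArg₂ (· * ·) (congrArg₂ (· * ·) (congrArg t' ?_) (congrArg t'' ?_)) ?_
  · funext i
    by_cases hi : i.1 ∈ A'
    · rw [dif_pos ((hSB' _ i.2).2 hi), rowEquiv_apply_of_mem_left hi, dif_pos (by simpa using hi)]
    · rw [dif_neg (mt (hSB' _ i.2).1 hi), colEquiv_apply_of_mem_left i.2,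
        dif_neg (by simpa using hi)]
  · funext i
    by_cases hi : i.1 ∈ A''
    · rw [dif_pos ((hSB'' _ i.2).2 hi), rowEquiv_apply_of_mem_middle hi,
        dif_pos (by simpa using hi)]
    · rw [dif_neg (mt (hSB'' _ i.2).1 hi), colEquiv_apply_of_mem_middle i.2,
        dif_neg (by simpa using hi)]
  rw [← Finset.prod_sdiff hC, mul_comm, ← Finset.prod_coe_sort C, ← Finset.prod_coe_sort (_ \ C)]
  congr 1
  · exact Finset.prod_congr rfl fun i _ => by
      rw [dif_pos (Finset.mem_union_right _ i.2), rowEquiv_apply_of_mem_right i.2]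
  · exact Finset.prod_congr rfl fun i _ => by
      rw [dif_neg ((hblocks i).1 (Finset.mem_union_right _ i.2)), colEquiv_apply_of_mem_right i.2]

end Blocks

theorem stmt_8 {𝕜 : Type*} [Field 𝕜] (n : ℕ) (d : Fin n → ℕ)
    (B' B'' A' A'' C : Finset (Fin n))
    (hBdisj : Disjoint B' B'') (hA' : A' ⊆ B') (hA'' : A'' ⊆ B'')
    (hC : C ⊆ (B' ∪ B'')ᶜ)
    (t' : (∀ i : {i // i ∈ B'}, Fin (d i.1)) → 𝕜)
    (t'' : (∀ i : {i // i ∈ B''}, Fin (d i.1)) → 𝕜)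
    (x : ∀ i : Fin n, Fin (d i) → 𝕜) (hx : ∀ i ∉ B' ∪ B'', x i ≠ 0)
    (t : (∀ i, Fin (d i)) → 𝕜)
    (ht : t = fun v =>
      t' (fun i => v i.1) * t'' (fun i => v i.1) * ∏ i ∈ (B' ∪ B'')ᶜ, x i (v i))
    (q' q'' : ℕ)
    (hq' : flatteningRank (fun i : {i // i ∈ B'} => d i.1) (A'.subtype (· ∈ B')) t' = q')
    (hq'' : flatteningRank (fun i : {i // i ∈ B''} => d i.1) (A''.subtype (· ∈ B'')) t'' = q'') :
    flatteningRank d (A' ∪ A'' ∪ C) t = q' * q'' := by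
  subst ht hq' hq''
  have hxC : ∀ j : {j // j ∈ C}, x j ≠ 0 := fun j => hx j (Finset.mem_compl.1 (hC j.2))
  have hxE : ∀ j : {j // j ∈ (B' ∪ B'')ᶜ \ C}, x j ≠ 0 :=
    fun j => hx j (Finset.mem_compl.1 (Finset.mem_sdiff.1 j.2).1)
  rw [flatteningRank,
    ← rank_submatrix _ (rowEquiv d hBdisj hA' hA'' hC) (colEquiv d hBdisj hA' hA'' hC),
    flattening_submatrix_eq_kronecker, rank_kronecker, rank_kronecker,
    rank_vecMulVec_of_ne_zero (simpleTensor_ne_zero hxC) (simpleTensor_ne_zero hxE), mul_one]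
  rfl
end

section
/- Let V₁, …, Vₙ (n = 2^k) be finite-dimensional vector spaces and let t ∈ V₁ ⊗ ⋯ ⊗ Vₙ be such that for every j with 0 ≤ j ≤ n, the flattening rank of t with respect to the initial segment {1, …, j} is at most r. Then for every dyadic interval D ⊆ {1, …, n}, the flattening rank of t with respect to D is at most r². (That is, TT(r, 2^k) ⊆ HF(r², k) for the left-to-right leaf ordering.) -/
section

open Matrix

variable {𝕜 : Type*} [Field 𝕜]

theorem Matrix.exists_mul_mul_eq_self {m n : Type*} [Fintype m] [Fintype n]
    (M : Matrix m n 𝕜) :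
    ∃ (W : Matrix n (Fin M.rank) 𝕜) (V : Matrix (Fin M.rank) n 𝕜), M * W * V = M := by
  classical
  let b := Module.finBasisOfFinrankEq 𝕜 (LinearMap.range M.mulVecLin) rfl
  choose w hw using fun p => (b p).2
  have hcol (j : n) : M.col j ∈ LinearMap.range M.mulVecLin :=
    ⟨Pi.single j 1, M.mulVec_single_one j⟩
  refine ⟨Matrix.of fun j p => w p j, Matrix.of fun p j => b.repr ⟨_, hcol j⟩ p, ?_⟩
  ext i j
  have hj := congr_arg (fun v : LinearMap.range M.mulVecLin => (v : m → 𝕜) i)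
    (b.sum_repr ⟨_, hcol j⟩)
  simp only [Submodule.coe_sum, Submodule.coe_smul, Finset.sum_apply, Pi.smul_apply,
    smul_eq_mul, ← hw] at hj
  rw [mul_apply]
  refine Eq.trans (Finset.sum_congr rfl fun p _ => ?_) hj
  rw [mul_comm]
  rfl

theorem Matrix.rank_middle_le_mul {α β γ : Type*} [Fintype α] [Fintype β] [Fintype γ]
    (T : α → β → γ → 𝕜) :
    (Matrix.of fun y (xz : α × γ) => T xz.1 y xz.2).rank ≤
      (Matrix.of fun x (yz : β × γ) => T x yz.1 yz.2).rank *
        (Matrix.of fun (xy : α × β) z => T xy.1 xy.2 z).rank := by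
  set M₁ : Matrix α (β × γ) 𝕜 := Matrix.of fun x yz => T x yz.1 yz.2
  set M₂ : Matrix (α × β) γ 𝕜 := Matrix.of fun xy z => T xy.1 xy.2 z
  obtain ⟨W₁, G, hG⟩ := M₁.exists_mul_mul_eq_self
  obtain ⟨W, V, hV⟩ := M₂.exists_mul_mul_eq_self
  set F := M₁ * W₁
  let H : Matrix β (Fin M₁.rank × Fin M₂.rank) 𝕜 :=
    Matrix.of fun y pq => ∑ c, G pq.1 (y, c) * W c pq.2
  let K : Matrix (Fin M₁.rank × Fin M₂.rank) (α × γ) 𝕜 :=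
    Matrix.of fun pq xz => F xz.1 pq.1 * V pq.2 xz.2
  have hT₁ (x y z) : T x y z = ∑ p, F x p * G p (y, z) := (congr_fun₂ hG x (y, z)).symm
  have hT₂ (x y z) : T x y z = ∑ q, (∑ c, T x y c * W c q) * V q z :=
    (congr_fun₂ hV (x, y) z).symm
  have hHK : (Matrix.of fun y (xz : α × γ) => T xz.1 y xz.2) = H * K := by
    ext y ⟨x, z⟩
    rw [of_apply, hT₂]
    simp only [of_apply, mul_apply, H, K, hT₁ x y, Fintype.sum_prod_type, Finset.sum_mul]
    conv_lhs => enter [2, q]; rw [Finset.sum_comm]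
    rw [Finset.sum_comm]
    simp only [mul_comm, mul_assoc, mul_left_comm]
  calc _ = (H * K).rank := by rw [hHK]
    _ ≤ Fintype.card (Fin M₁.rank × Fin M₂.rank) :=
      (rank_mul_le_left H K).trans H.rank_le_card_width
    _ = M₁.rank * M₂.rank := by simp

theorem flatteningRank_le_mul {ι : Type*} [Fintype ι] [DecidableEq ι] (d : ι → ℕ)
    {A B : Finset ι} (hAB : Disjoint A B) (t : (∀ i, Fin (d i)) → 𝕜) :
    flatteningRank d B t ≤ flatteningRank d A t * flatteningRank d (A ∪ B) t := by
  let T (x : ∀ i : {i // i ∈ A}, Fin (d i.1)) (y : ∀ i : {i // i ∈ B}, Fin (d i.1))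
      (z : ∀ i : {i // i ∉ A ∪ B}, Fin (d i.1)) : 𝕜 :=
    t fun i => if hA : i ∈ A then x ⟨i, hA⟩ else if hB : i ∈ B then y ⟨i, hB⟩
      else z ⟨i, by simp [hA, hB]⟩
  have h₁ : Matrix.of (fun x (yz : _ × _) => T x yz.1 yz.2) =
      (flattening d A t).submatrix id
        fun yz i => if hB : i.1 ∈ B then yz.1 ⟨i, hB⟩ else yz.2 ⟨i, by simp [i.2, hB]⟩ := rfl
  have h₂ : Matrix.of (fun (xy : _ × _) z => T xy.1 xy.2 z) =
      (flattening d (A ∪ B) t).submatrix (fun xy i => if hA : i.1 ∈ A then xy.1 ⟨i, hA⟩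
        else xy.2 ⟨i, (Finset.mem_union.1 i.2).resolve_left hA⟩) id := by
    ext xy z
    refine congrArg t (funext fun i => ?_)
    by_cases hA : i ∈ A
    · simp [hA]
    · by_cases hB : i ∈ B <;> simp [hA, hB]
  have h₃ : flattening d B t = (Matrix.of fun y (xz : _ × _) => T xz.1 y xz.2).submatrix id
      fun w => (fun i => w ⟨i, Finset.disjoint_left.1 hAB i.2⟩,
        fun i => w ⟨i, fun hB => i.2 (Finset.mem_union_right A hB)⟩) := by
    ext y w
    refine congrArg t (funext fun i => ?_)
    by_cases hA : i ∈ A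
    · simp [hA, Finset.disjoint_left.1 hAB hA]
    · by_cases hB : i ∈ B <;> simp [hA, hB]
  calc flatteningRank d B t ≤ (Matrix.of fun y (xz : _ × _) => T xz.1 y xz.2).rank := by
        rw [flatteningRank, h₃]
        exact rank_submatrix_le _ _ _
    _ ≤ _ := rank_middle_le_mul T
    _ ≤ _ := by
      rw [h₁, h₂]
      exact Nat.mul_le_mul (rank_submatrix_le _ _ _) (rank_submatrix_le _ _ _)

theorem flatteningRank_interval_le {n : ℕ} (d : Fin n → ℕ) (t : (∀ i, Fin (d i)) → 𝕜)
    {a b : ℕ} (hab : a ≤ b) :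
    flatteningRank d (Finset.univ.filter fun i : Fin n => a ≤ (i : ℕ) ∧ (i : ℕ) < b) t ≤
      flatteningRank d (Finset.univ.filter fun i : Fin n => (i : ℕ) < a) t *
        flatteningRank d (Finset.univ.filter fun i : Fin n => (i : ℕ) < b) t := by
  have hdisj : Disjoint (Finset.univ.filter fun i : Fin n => (i : ℕ) < a)
      (Finset.univ.filter fun i : Fin n => a ≤ (i : ℕ) ∧ (i : ℕ) < b) :=
    Finset.disjoint_filter.2 fun i _ hi hi' => by omega
  have hunion : (Finset.univ.filter fun i : Fin n => (i : ℕ) < a) ∪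
      (Finset.univ.filter fun i : Fin n => a ≤ (i : ℕ) ∧ (i : ℕ) < b) =
        Finset.univ.filter fun i : Fin n => (i : ℕ) < b := by
    ext i
    simp only [Finset.mem_union, Finset.mem_filter, Finset.mem_univ, true_and]
    omega
  simpa only [hunion] using flatteningRank_le_mul d hdisj t

end

/-- Leaves are indexed zero-based by `Fin (2^k)`: the initial segment `{1, …, j}` is
`{i | i < j}` and the dyadic interval `{m·2^s + 1, …, (m+1)·2^s}` is
`{i | m·2^s ≤ i < (m+1)·2^s}`. -/
theorem stmt_13 {𝕜 : Type*} [Field 𝕜] (k : ℕ) (d : Fin (2 ^ k) → ℕ) (r : ℕ)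
    (t : (∀ i, Fin (d i)) → 𝕜)
    (ht : ∀ j ≤ 2 ^ k,
      flatteningRank d (Finset.univ.filter fun i : Fin (2 ^ k) => (i : ℕ) < j) t ≤ r) :
    ∀ m s : ℕ, (m + 1) * 2 ^ s ≤ 2 ^ k →
      flatteningRank d (Finset.univ.filter fun i : Fin (2 ^ k) =>
        m * 2 ^ s ≤ (i : ℕ) ∧ (i : ℕ) < (m + 1) * 2 ^ s) t ≤ r ^ 2 := by
  intro m s hms
  have hle : m * 2 ^ s ≤ (m + 1) * 2 ^ s := Nat.mul_le_mul_right _ m.le_succ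
  calc _ ≤ _ := flatteningRank_interval_le d t hle
    _ ≤ r * r := Nat.mul_le_mul (ht _ (hle.trans hms)) (ht _ hms)
    _ = r ^ 2 := (sq r).symm
end

section
/- Let V₁, …, Vₙ be finite-dimensional vector spaces, σ a permutation of {1, …, n}, and r ≥ 2, with n = 2^k, k ≥ 3, and dim V_i ≥ r for all i. Suppose 2i−1 and 2i form a cherry of the perfect binary tree (for some 1 ≤ i ≤ 2^{k−1}) such that the positions σ^{-1}(2i−1) and σ^{-1}(2i) are both strictly between 1 and n. Then there exists a tensor t ∈ V₁ ⊗ ⋯ ⊗ Vₙ such that the flattening rank of t with respect to every σ-initial segment {σ(1), …, σ(j)} is at most r, while the flattening rank of t with respect to {2i−1, 2i} equals r². (Hence TT(r, 2^k) is not contained in HF(r² − 1, k) for any ordering of the leaves.) -/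
theorem Matrix.card_le_rank_of_submatrix_eq_one {R m n γ : Type*} [CommRing R]
    [StrongRankCondition R] [Fintype n] [Fintype γ] [DecidableEq γ] (M : Matrix m n R)
    (rows : γ → m) (cols : γ → n) (h : M.submatrix rows cols = 1) :
    Fintype.card γ ≤ M.rank := by
  simpa [h, Matrix.rank_one] using M.rank_submatrix_le rows cols

section

variable {𝕜 ι : Type*} [Field 𝕜] [Fintype ι] [DecidableEq ι]

def FlatteningFactorsThrough (d : ι → ℕ) (S : Finset ι) (γ : Type*) [Fintype γ]
    (t : (∀ i, Fin (d i)) → 𝕜) : Prop :=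
  ∃ (A : Matrix (∀ i : {i // i ∈ S}, Fin (d i.1)) γ 𝕜)
    (B : Matrix γ (∀ i : {i // i ∉ S}, Fin (d i.1)) 𝕜), flattening d S t = A * B

namespace FlatteningFactorsThrough

variable {d : ι → ℕ} {S : Finset ι} {γ γ' : Type*} [Fintype γ] [Fintype γ'] {t s : (∀ i, Fin (d i)) → 𝕜}

theorem flatteningRank_le (h : FlatteningFactorsThrough d S γ t) :
    flatteningRank d S t ≤ Fintype.card γ := by
  obtain ⟨A, B, hAB⟩ := h
  rw [flatteningRank, hAB]
  exact (Matrix.rank_mul_le_left A B).trans (Matrix.rank_le_card_width A)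

theorem mul (ht : FlatteningFactorsThrough d S γ t) (hs : FlatteningFactorsThrough d S γ' s) :
    FlatteningFactorsThrough d S (γ × γ') (t * s) := by
  obtain ⟨A, B, hAB⟩ := ht
  obtain ⟨A', B', hAB'⟩ := hs
  refine ⟨.of fun a p => A a p.1 * A' a p.2, .of fun p b => B p.1 b * B' p.2 b, ?_⟩
  ext a b
  change flattening d S t a b * flattening d S s a b = _
  simp only [hAB, hAB', Matrix.mul_apply, Matrix.of_apply, Fintype.sum_prod_type,
    Finset.sum_mul_sum]
  exact Finset.sum_congr rfl fun _ _ => Finset.sum_congr rfl fun _ _ => by ring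

theorem sum {κ : Type*} [Fintype κ] {t : κ → (∀ i, Fin (d i)) → 𝕜}
    (h : ∀ c, FlatteningFactorsThrough d S γ (t c)) :
    FlatteningFactorsThrough d S (κ × γ) (∑ c, t c) := by
  choose A B hAB using h
  refine ⟨.of fun a p => A p.1 a p.2, .of fun p b => B p.1 p.2 b, ?_⟩
  ext a b
  change (∑ c, t c) _ = _
  simp only [Finset.sum_apply, Matrix.mul_apply, Matrix.of_apply, Fintype.sum_prod_type]
  exact Finset.sum_congr rfl fun c _ => congrFun₂ (hAB c) a b

theorem of_mem_iff_mem {w w' : ι} (φ : Fin (d w) → Fin (d w') → 𝕜) (h : w ∈ S ↔ w' ∈ S) :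
    FlatteningFactorsThrough d S Unit (fun x => φ (x w) (x w')) := by
  by_cases hw : w ∈ S
  · have hw' := h.1 hw
    exact ⟨.of fun a _ => φ (a ⟨w, hw⟩) (a ⟨w', hw'⟩), .of fun _ _ => 1, by
      ext a b; simp [flattening, Matrix.mul_apply, hw, hw']⟩
  · have hw' : w' ∉ S := mt h.2 hw
    exact ⟨.of fun _ _ => 1, .of fun _ b => φ (b ⟨w, hw⟩) (b ⟨w', hw'⟩), by
      ext a b; simp [flattening, Matrix.mul_apply, hw, hw']⟩

theorem of_coord {w : ι} (φ : Fin (d w) → 𝕜) :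
    FlatteningFactorsThrough d S Unit (fun x => φ (x w)) :=
  of_mem_iff_mem (fun p _ => φ p) Iff.rfl

end FlatteningFactorsThrough

/-- The identity `∑_{c < r} e_c ⊗ e_c` between the factors `w` and `w'`, tensored with the
all-ones vector in every other factor. -/
def bondTensor (d : ι → ℕ) (r : ℕ) (w w' : ι) (x : ∀ i, Fin (d i)) : 𝕜 :=
  ∑ c : Fin r, (if (x w : ℕ) = c then 1 else 0) * (if (x w' : ℕ) = c then 1 else 0)

section bondTensor

variable {d : ι → ℕ} (r : ℕ) {S : Finset ι} {w w' w₁ w₂ w₃ w₄ : ι}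

theorem flatteningFactorsThrough_bondTensor :
    FlatteningFactorsThrough d S (Fin r × (Unit × Unit)) (bondTensor (𝕜 := 𝕜) d r w w') := by
  have : bondTensor (𝕜 := 𝕜) d r w w' = ∑ c : Fin r,
      (fun x => if (x w : ℕ) = c then 1 else 0) * (fun x => if (x w' : ℕ) = c then 1 else 0) := by
    ext x; simp [bondTensor, Finset.sum_apply]
  rw [this]
  exact .sum fun c => (FlatteningFactorsThrough.of_coord fun p => if (p : ℕ) = c then 1 else 0).mul
    (.of_coord fun p => if (p : ℕ) = c then 1 else 0)

theorem flatteningFactorsThrough_bondTensor_of_mem_iff_mem (h : w ∈ S ↔ w' ∈ S) :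
    FlatteningFactorsThrough d S Unit (bondTensor (𝕜 := 𝕜) d r w w') :=
  .of_mem_iff_mem (fun p q => ∑ c : Fin r,
    (if (p : ℕ) = c then 1 else 0) * (if (q : ℕ) = c then 1 else 0)) h

theorem flatteningRank_bondTensor_mul_le_sq :
    flatteningRank d S (bondTensor d r w₁ w₂ * bondTensor d r w₃ w₄ : _ → 𝕜) ≤ r ^ 2 := by
  simpa [sq] using ((flatteningFactorsThrough_bondTensor r).mul
    (flatteningFactorsThrough_bondTensor r)).flatteningRank_le

theorem flatteningRank_bondTensor_mul_le (h : (w₁ ∈ S ↔ w₂ ∈ S) ∨ (w₃ ∈ S ↔ w₄ ∈ S)) :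
    flatteningRank d S (bondTensor d r w₁ w₂ * bondTensor d r w₃ w₄ : _ → 𝕜) ≤ r := by
  rcases h with h | h
  · simpa using ((flatteningFactorsThrough_bondTensor_of_mem_iff_mem r h).mul
      (flatteningFactorsThrough_bondTensor r)).flatteningRank_le
  · simpa using ((flatteningFactorsThrough_bondTensor r).mul
      (flatteningFactorsThrough_bondTensor_of_mem_iff_mem r h)).flatteningRank_le

theorem sq_le_flatteningRank_bondTensor_mul (hd : ∀ i, r ≤ d i) (h₁ : w₁ ∈ S) (h₃ : w₃ ∈ S)
    (h₂ : w₂ ∉ S) (h₄ : w₄ ∉ S) (h₁₃ : w₁ ≠ w₃) (h₂₄ : w₂ ≠ w₄) :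
    r ^ 2 ≤ flatteningRank d S (bondTensor d r w₁ w₂ * bondTensor d r w₃ w₄ : _ → 𝕜) := by
  let rows : Fin r × Fin r → ∀ i : {i // i ∈ S}, Fin (d i.1) := fun p i =>
    Fin.castLE (hd i) (if i.1 = w₁ then p.1 else p.2)
  let cols : Fin r × Fin r → ∀ i : {i // i ∉ S}, Fin (d i.1) := fun q i =>
    Fin.castLE (hd i) (if i.1 = w₂ then q.1 else q.2)
  suffices h : (flattening d S (bondTensor d r w₁ w₂ * bondTensor d r w₃ w₄ : _ → 𝕜)).submatrix
      rows cols = 1 by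
    simpa [sq, flatteningRank] using Matrix.card_le_rank_of_submatrix_eq_one _ rows cols h
  ext p q
  simp only [Matrix.submatrix_apply, flattening, Pi.mul_apply, bondTensor, h₁, h₂, h₃, h₄,
    h₁₃.symm, h₂₄.symm, rows, cols, ↓reduceDIte, ↓reduceIte, Fin.val_castLE, Fin.val_inj,
    mul_ite, mul_one, mul_zero, Finset.sum_ite_eq, Finset.mem_univ, Matrix.one_apply,
    Prod.ext_iff]
  simp only [← ite_and, and_comm]

end bondTensor

end

theorem exists_neighbours_uncut {N : ℕ} {A B : Fin N} (hAB : A ≠ B)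
    (hA : 0 < (A : ℕ) ∧ (A : ℕ) < N - 1) (hB : 0 < (B : ℕ) ∧ (B : ℕ) < N - 1) :
    ∃ a b : Fin N, a ≠ A ∧ a ≠ B ∧ b ≠ A ∧ b ≠ B ∧ a ≠ b ∧
      ∀ j : ℕ, ((A : ℕ) < j ↔ (a : ℕ) < j) ∨ ((B : ℕ) < j ↔ (b : ℕ) < j) := by
  -- The neighbour of `A` is `A + 1`, or `A - 1` if `A + 1 = B`, and symmetrically for `B`; then
  -- the two segments that end between a leaf and its neighbour differ.
  rw [Ne, Fin.ext_iff] at hAB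
  refine ⟨⟨if (A : ℕ) + 1 = B then (A : ℕ) - 1 else (A : ℕ) + 1, by split_ifs <;> omega⟩,
    ⟨if (B : ℕ) + 1 = A then (B : ℕ) - 1 else (B : ℕ) + 1, by split_ifs <;> omega⟩, ?_⟩
  simp only [Ne, Fin.ext_iff]
  refine ⟨?_, ?_, ?_, ?_, ?_, fun j => ?_⟩ <;> split_ifs <;> omega

/-- Leaves are indexed by `Fin (2^k)`, zero-based; the cherry `{2i−1, 2i}` (1-based) becomes
`{2i, 2i+1}` (0-based), and the σ-initial segments are `{σ(0), …, σ(j−1)}`. -/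
theorem stmt_16_general {𝕜 : Type*} [Field 𝕜] (k r : ℕ)
    (d : Fin (2 ^ k) → ℕ) (hd : ∀ i, r ≤ d i)
    (σ : Equiv.Perm (Fin (2 ^ k)))
    (i : ℕ)
    (c₁ : Fin (2 ^ k)) (hc₁ : (c₁ : ℕ) = 2 * i)
    (c₂ : Fin (2 ^ k)) (hc₂ : (c₂ : ℕ) = 2 * i + 1)
    (hpos₁ : 0 < (σ.symm c₁ : ℕ) ∧ (σ.symm c₁ : ℕ) < 2 ^ k - 1)
    (hpos₂ : 0 < (σ.symm c₂ : ℕ) ∧ (σ.symm c₂ : ℕ) < 2 ^ k - 1) :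
    ∃ t : (∀ l, Fin (d l)) → 𝕜,
      (∀ j : ℕ,
        flatteningRank d (Finset.univ.filter fun l : Fin (2 ^ k) =>
          ((σ.symm l : ℕ) < j)) t ≤ r) ∧
      flatteningRank d {c₁, c₂} t = r ^ 2 := by
  have hc : c₁ ≠ c₂ := fun h => by rw [h] at hc₁; omega
  obtain ⟨a, b, ha₁, ha₂, hb₁, hb₂, hab, hcut⟩ :=
    exists_neighbours_uncut (σ.symm.injective.ne hc) hpos₁ hpos₂
  refine ⟨bondTensor d r c₁ (σ a) * bondTensor d r c₂ (σ b), fun j => ?_, ?_⟩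
  · exact flatteningRank_bondTensor_mul_le r (by simpa using hcut j)
  · refine le_antisymm (flatteningRank_bondTensor_mul_le_sq r)
      (sq_le_flatteningRank_bondTensor_mul r hd (by simp) (by simp) ?_ ?_ hc (σ.injective.ne hab))
    · simp [← Equiv.eq_symm_apply, ha₁, ha₂]
    · simp [← Equiv.eq_symm_apply, hb₁, hb₂]

/-- TT(r, 2^k) ⊄ HF(r² − 1, k) for any matching of the leaves.  Leaves are indexed by
`Fin (2^k)`, zero-based; the cherry `{2i−1, 2i}` (1-based) becomes `{2i, 2i+1}` (0-based),
and the σ-initial segments are `{σ(0), …, σ(j−1)}`. -/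
theorem stmt_16 {𝕜 : Type*} [Field 𝕜] (k r : ℕ) (hk : 3 ≤ k) (hr : 2 ≤ r)
    (d : Fin (2 ^ k) → ℕ) (hd : ∀ i, r ≤ d i)
    (σ : Equiv.Perm (Fin (2 ^ k)))
    (i : ℕ) (hi : 2 * i + 1 < 2 ^ k)
    (c₁ : Fin (2 ^ k)) (hc₁ : (c₁ : ℕ) = 2 * i)
    (c₂ : Fin (2 ^ k)) (hc₂ : (c₂ : ℕ) = 2 * i + 1)
    (hpos₁ : 0 < (σ.symm c₁ : ℕ) ∧ (σ.symm c₁ : ℕ) < 2 ^ k - 1)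
    (hpos₂ : 0 < (σ.symm c₂ : ℕ) ∧ (σ.symm c₂ : ℕ) < 2 ^ k - 1) :
    ∃ t : (∀ l, Fin (d l)) → 𝕜,
      (∀ j : ℕ,
        flatteningRank d (Finset.univ.filter fun l : Fin (2 ^ k) =>
          ((σ.symm l : ℕ) < j)) t ≤ r) ∧
      flatteningRank d {c₁, c₂} t = r ^ 2 :=
  stmt_16_general k r d hd σ i c₁ hc₁ c₂ hc₂ hpos₁ hpos₂
end

section
/- Let V₁, …, Vₙ be finite-dimensional vector spaces, T a full binary tree with leaves matched to 1,…,n, and r a positive integer. A tensor t ∈ V₁ ⊗ ⋯ ⊗ Vₙ satisfies: there exist subspaces U_v for every vertex v of T with dim U_v ≤ r, U_l ⊆ V_l for every leaf l, U_v ⊆ U_{v₁} ⊗ U_{v₂} for every node v with children v₁, v₂, and t ∈ U_root — if and only if for every vertex v of T, the flattening rank of t with respect to desc(v) (the leaf-descendants of v) is at most r. -/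
/-- A full binary tree with leaves labelled by elements of `α`. -/
inductive LTree (α : Type*) : Type _
  | leaf : α → LTree α
  | node : LTree α → LTree α → LTree α

namespace LTree

variable {α : Type*}

/-- The list of leaf labels, from left to right. -/
def leafList : LTree α → List α
  | leaf a => [a]
  | node l r => leafList l ++ leafList r

/-- The set of subtrees of a tree; each vertex corresponds to the subtree rooted at it. -/
def subtrees : LTree α → Set (LTree α)
  | leaf a => {leaf a}
  | node l r => {node l r} ∪ subtrees l ∪ subtrees r

/-- The finite set of leaf labels descending from (the root of) a tree. -/
def descFinset [DecidableEq α] : LTree α → Finset α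
  | leaf a => {a}
  | node l r => descFinset l ∪ descFinset r

end LTree

/-- The coordinate model `⊗_{i ∈ S} V_i` where `V_i = 𝕜^{d i}`. -/
def TSpace (𝕜 : Type*) [Field 𝕜] {n : ℕ} (d : Fin n → ℕ) (S : Finset (Fin n)) : Type _ :=
  (∀ i : {i // i ∈ S}, Fin (d i.1)) → 𝕜

noncomputable instance {𝕜 : Type*} [Field 𝕜] {n : ℕ} (d : Fin n → ℕ) (S : Finset (Fin n)) :
    AddCommGroup (TSpace 𝕜 d S) := Pi.addCommGroup

noncomputable instance {𝕜 : Type*} [Field 𝕜] {n : ℕ} (d : Fin n → ℕ) (S : Finset (Fin n)) :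
    Module 𝕜 (TSpace 𝕜 d S) := Pi.module _ _ _

/-- The product (tensor product, in coordinates) of a tensor on the factors in `S₁` and a
tensor on the factors in `S₂`, for disjoint `S₁`, `S₂`. -/
def combine {𝕜 : Type*} [Field 𝕜] {n : ℕ} (d : Fin n → ℕ) {S₁ S₂ : Finset (Fin n)}
    (f : TSpace 𝕜 d S₁) (g : TSpace 𝕜 d S₂) : TSpace 𝕜 d (S₁ ∪ S₂) :=
  fun v => f (fun i => v ⟨i.1, Finset.mem_union_left _ i.2⟩) *
    g (fun i => v ⟨i.1, Finset.mem_union_right _ i.2⟩)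

/-- The tensor product `U₁ ⊗ U₂` of subspaces `U₁ ⊆ ⊗_{i∈S₁} V_i`, `U₂ ⊆ ⊗_{i∈S₂} V_i`,
realised inside `⊗_{i ∈ S₁ ∪ S₂} V_i`. -/
noncomputable def mulSpan {𝕜 : Type*} [Field 𝕜] {n : ℕ} (d : Fin n → ℕ) {S₁ S₂ : Finset (Fin n)}
    (U₁ : Submodule 𝕜 (TSpace 𝕜 d S₁)) (U₂ : Submodule 𝕜 (TSpace 𝕜 d S₂)) :
    Submodule 𝕜 (TSpace 𝕜 d (S₁ ∪ S₂)) :=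
  Submodule.span 𝕜 {h | ∃ f ∈ U₁, ∃ g ∈ U₂, h = combine d f g}

/-- An admissible system of subspaces witnessing membership in the tensor network
variety `TNS_{T,r}`: a subspace `U_v` of dimension at most `r` for each vertex `v`,
with `U_v ⊆ U_{v₁} ⊗ U_{v₂}` at each node.  The predicate records the subspace at the
root; the subspaces at the other vertices are quantified existentially. -/
def goodSubspaces {𝕜 : Type*} [Field 𝕜] {n : ℕ} (d : Fin n → ℕ) (r : ℕ) :
    (T : LTree (Fin n)) → Submodule 𝕜 (TSpace 𝕜 d T.descFinset) → Prop
  | .leaf _, U => Module.finrank 𝕜 U ≤ r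
  | .node l rt, U => Module.finrank 𝕜 U ≤ r ∧
      ∃ (U₁ : Submodule 𝕜 (TSpace 𝕜 d l.descFinset))
        (U₂ : Submodule 𝕜 (TSpace 𝕜 d rt.descFinset)),
        goodSubspaces d r l U₁ ∧ goodSubspaces d r rt U₂ ∧ U ≤ mulSpan d U₁ U₂

/-!
If `U_v ⊆ U_{v₁} ⊗ U_{v₂}`, fixing the coordinates outside a set of leaves below `v₁` turns
every element of `U_v` into a combination of such partial evaluations of elements of `U_{v₁}`.
By induction, all partial evaluations of the root space onto `desc(w)` lie in one subspace of
dimension at most `r`; the columns of the flattening of `t` at `desc(w)` are among them.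

Conversely, the column spaces of the flattenings form an admissible system: a tensor on
`S₁ ⊔ S₂` all of whose partial evaluations onto `S₁` lie in `U₁` and onto `S₂` lie in `U₂`
is a matrix with columns in `U₁` and rows in `U₂`, and expanding the rows in a basis of `U₂`
writes it as an element of `U₁ ⊗ U₂`.
-/

theorem LinearMap.apply_rows_mem_of_cols_mem {𝕜 A₁ A₂ : Type*} [Field 𝕜] [Fintype A₂]
    {M : A₁ → A₂ → 𝕜} {U : Submodule 𝕜 (A₁ → 𝕜)} (hcol : ∀ a₂, (fun a₁ => M a₁ a₂) ∈ U)
    (φ : (A₂ → 𝕜) →ₗ[𝕜] 𝕜) : (fun a₁ => φ (M a₁)) ∈ U := by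
  classical
  have hφ : (fun a₁ => φ (M a₁)) =
      ∑ a₂, φ (fun j => if a₂ = j then 1 else 0) • fun a₁ => M a₁ a₂ := by
    funext a₁
    simp only [φ.pi_apply_eq_sum_univ (M a₁), Finset.sum_apply, Pi.smul_apply, smul_eq_mul,
      mul_comm]
  rw [hφ]
  exact U.sum_mem fun a₂ _ => U.smul_mem _ (hcol a₂)

theorem exists_sum_mul_of_cols_mem_of_rows_mem {𝕜 A₁ A₂ : Type*} [Field 𝕜] [Fintype A₂]
    {M : A₁ → A₂ → 𝕜} {U₁ : Submodule 𝕜 (A₁ → 𝕜)} {U₂ : Submodule 𝕜 (A₂ → 𝕜)}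
    (hcol : ∀ a₂, (fun a₁ => M a₁ a₂) ∈ U₁) (hrow : ∀ a₁, M a₁ ∈ U₂) :
    ∃ (k : ℕ) (f : Fin k → A₁ → 𝕜) (g : Fin k → A₂ → 𝕜),
      (∀ j, f j ∈ U₁) ∧ (∀ j, g j ∈ U₂) ∧ ∀ a₁ a₂, M a₁ a₂ = ∑ j, f j a₁ * g j a₂ := by
  let e := Module.finBasis 𝕜 U₂
  -- Expanding each row in the basis `e`, the coefficients are linear functionals of the row.
  choose φ hφ using fun j => LinearMap.exists_extend (e.coord j)
  have hφM : ∀ j a₁, φ j (M a₁) = e.repr ⟨M a₁, hrow a₁⟩ j := fun j a₁ =>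
    LinearMap.congr_fun (hφ j) ⟨M a₁, hrow a₁⟩
  refine ⟨_, fun j a₁ => φ j (M a₁), fun j => e j,
    fun j => LinearMap.apply_rows_mem_of_cols_mem hcol (φ j), fun j => (e j).2, fun a₁ a₂ => ?_⟩
  have hrepr := congrArg (fun x : U₂ => (x : A₂ → 𝕜) a₂) (e.sum_repr ⟨M a₁, hrow a₁⟩)
  simp only [Submodule.coe_sum, Submodule.coe_smul, Finset.sum_apply, Pi.smul_apply,
    smul_eq_mul] at hrepr
  simp only [hφM, hrepr]

namespace LTree

variable {α : Type*} [DecidableEq α]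

theorem mem_descFinset_iff_mem_leafList {x : α} : ∀ {v : LTree α},
    x ∈ v.descFinset ↔ x ∈ v.leafList
  | leaf a => by simp [descFinset, leafList]
  | node l r => by
      simp [descFinset, leafList, mem_descFinset_iff_mem_leafList (v := l),
        mem_descFinset_iff_mem_leafList (v := r)]

theorem disjoint_descFinset_of_nodup {l r : LTree α} (h : (node l r).leafList.Nodup) :
    Disjoint l.descFinset r.descFinset :=
  Finset.disjoint_left.2 fun _ hl hr => List.disjoint_of_nodup_append h
    (mem_descFinset_iff_mem_leafList.1 hl) (mem_descFinset_iff_mem_leafList.1 hr)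

theorem descFinset_subset_of_mem_subtrees : ∀ {v w : LTree α}, w ∈ v.subtrees →
    w.descFinset ⊆ v.descFinset
  | leaf _, _, rfl => subset_rfl
  | node _ _, _, Or.inl (Or.inl rfl) => subset_rfl
  | node _ _, _, Or.inl (Or.inr hw) =>
      (descFinset_subset_of_mem_subtrees hw).trans Finset.subset_union_left
  | node _ _, _, Or.inr hw =>
      (descFinset_subset_of_mem_subtrees hw).trans Finset.subset_union_right

end LTree

section Slice

variable {𝕜 : Type*} [Field 𝕜] {n : ℕ} (d : Fin n → ℕ)

/-- Partial evaluation of a tensor on the factors in `S`: the coordinates outside `S'` are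
fixed to `c`. -/
def slice {S S' : Finset (Fin n)} (c : ∀ i : {i // i ∈ S \ S'}, Fin (d i.1)) :
    TSpace 𝕜 d S →ₗ[𝕜] TSpace 𝕜 d S' where
  toFun s a := s fun i =>
    if h : i.1 ∈ S' then a ⟨i.1, h⟩ else c ⟨i.1, Finset.mem_sdiff.2 ⟨i.2, h⟩⟩
  map_add' _ _ := rfl
  map_smul' _ _ := rfl

theorem slice_self {S : Finset (Fin n)} (c : ∀ i : {i // i ∈ S \ S}, Fin (d i.1))
    (s : TSpace 𝕜 d S) : slice d c s = s :=
  funext fun _ => congrArg s (funext fun i => dif_pos i.2)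

theorem exists_slice_combine_eq_smul_slice_left {S₁ S₂ S' : Finset (Fin n)}
    (h : Disjoint S₂ S') (c : ∀ i : {i // i ∈ (S₁ ∪ S₂) \ S'}, Fin (d i.1))
    (f : TSpace 𝕜 d S₁) (g : TSpace 𝕜 d S₂) :
    ∃ (a : 𝕜) (c' : ∀ i : {i // i ∈ S₁ \ S'}, Fin (d i.1)),
      slice d c (combine d f g) = a • slice d c' f := by
  refine ⟨g fun i => c ⟨i.1, Finset.mem_sdiff.2
      ⟨Finset.mem_union_right _ i.2, Finset.disjoint_left.1 h i.2⟩⟩,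
    fun i => c ⟨i.1, Finset.mem_sdiff.2
      ⟨Finset.mem_union_left _ (Finset.mem_sdiff.1 i.2).1, (Finset.mem_sdiff.1 i.2).2⟩⟩, ?_⟩
  funext a
  change f _ * g _ = g _ * f _
  rw [mul_comm]
  congr 1
  exact congrArg g (funext fun i => dif_neg (Finset.disjoint_left.1 h i.2))

theorem exists_slice_combine_eq_smul_slice_right {S₁ S₂ S' : Finset (Fin n)}
    (h : Disjoint S₁ S') (c : ∀ i : {i // i ∈ (S₁ ∪ S₂) \ S'}, Fin (d i.1))
    (f : TSpace 𝕜 d S₁) (g : TSpace 𝕜 d S₂) :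
    ∃ (a : 𝕜) (c' : ∀ i : {i // i ∈ S₂ \ S'}, Fin (d i.1)),
      slice d c (combine d f g) = a • slice d c' g := by
  refine ⟨f fun i => c ⟨i.1, Finset.mem_sdiff.2
      ⟨Finset.mem_union_left _ i.2, Finset.disjoint_left.1 h i.2⟩⟩,
    fun i => c ⟨i.1, Finset.mem_sdiff.2
      ⟨Finset.mem_union_right _ (Finset.mem_sdiff.1 i.2).1, (Finset.mem_sdiff.1 i.2).2⟩⟩, ?_⟩
  funext a
  change f _ * g _ = f _ * g _
  congr 1
  exact congrArg f (funext fun i => dif_neg (Finset.disjoint_left.1 h i.2))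

def SlicesIn {S S' : Finset (Fin n)} (U : Submodule 𝕜 (TSpace 𝕜 d S))
    (W : Submodule 𝕜 (TSpace 𝕜 d S')) : Prop :=
  ∀ s ∈ U, ∀ c, slice d c s ∈ W

variable {d}

theorem slicesIn_refl {S : Finset (Fin n)} (U : Submodule 𝕜 (TSpace 𝕜 d S)) : SlicesIn d U U :=
  fun s hs c => by rwa [slice_self]

theorem SlicesIn.mulSpan_left {S₁ S₂ S' : Finset (Fin n)} {U₁ : Submodule 𝕜 (TSpace 𝕜 d S₁)}
    {W : Submodule 𝕜 (TSpace 𝕜 d S')} (hU₁ : SlicesIn d U₁ W) (h : Disjoint S₂ S')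
    (U₂ : Submodule 𝕜 (TSpace 𝕜 d S₂)) : SlicesIn d (mulSpan d U₁ U₂) W := by
  intro s hs c
  refine (Submodule.span_le (p := W.comap (slice d c))).2 ?_ hs
  rintro _ ⟨f, hf, g, -, rfl⟩
  obtain ⟨a, c', hfg⟩ := exists_slice_combine_eq_smul_slice_left d h c f g
  simpa [hfg] using W.smul_mem a (hU₁ f hf c')

theorem SlicesIn.mulSpan_right {S₁ S₂ S' : Finset (Fin n)} {U₂ : Submodule 𝕜 (TSpace 𝕜 d S₂)}
    {W : Submodule 𝕜 (TSpace 𝕜 d S')} (hU₂ : SlicesIn d U₂ W) (h : Disjoint S₁ S')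
    (U₁ : Submodule 𝕜 (TSpace 𝕜 d S₁)) : SlicesIn d (mulSpan d U₁ U₂) W := by
  intro s hs c
  refine (Submodule.span_le (p := W.comap (slice d c))).2 ?_ hs
  rintro _ ⟨f, -, g, hg, rfl⟩
  obtain ⟨a, c', hfg⟩ := exists_slice_combine_eq_smul_slice_right d h c f g
  simpa [hfg] using W.smul_mem a (hU₂ g hg c')

theorem SlicesIn.mono {S S' : Finset (Fin n)} {U U' : Submodule 𝕜 (TSpace 𝕜 d S)}
    {W : Submodule 𝕜 (TSpace 𝕜 d S')} (hU : SlicesIn d U W) (h : U' ≤ U) : SlicesIn d U' W :=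
  fun s hs => hU s (h hs)

end Slice

section Flattening

open Matrix

variable {𝕜 : Type*} [Field 𝕜] {n : ℕ} {d : Fin n → ℕ} {r : ℕ}

theorem exists_slicesIn_of_goodSubspaces : ∀ {v : LTree (Fin n)}, v.leafList.Nodup →
    ∀ {U : Submodule 𝕜 (TSpace 𝕜 d v.descFinset)}, goodSubspaces d r v U →
    ∀ {w : LTree (Fin n)}, w ∈ v.subtrees →
      ∃ W : Submodule 𝕜 (TSpace 𝕜 d w.descFinset), Module.finrank 𝕜 W ≤ r ∧ SlicesIn d U W
  | .leaf _, _, U, hU, _, rfl => ⟨U, hU, slicesIn_refl U⟩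
  | .node _ _, _, U, hU, _, Or.inl (Or.inl rfl) => ⟨U, hU.1, slicesIn_refl U⟩
  | .node _ _, hnd, _, ⟨_, _, U₂, h₁, _, hle⟩, _, Or.inl (Or.inr hw) => by
      obtain ⟨W, hWr, hW⟩ := exists_slicesIn_of_goodSubspaces (List.nodup_append.1 hnd).1 h₁ hw
      have hdisj := (LTree.disjoint_descFinset_of_nodup hnd).symm.mono_right
        (LTree.descFinset_subset_of_mem_subtrees hw)
      exact ⟨W, hWr, (hW.mulSpan_left hdisj U₂).mono hle⟩
  | .node _ _, hnd, _, ⟨_, U₁, _, _, h₂, hle⟩, _, Or.inr hw => by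
      obtain ⟨W, hWr, hW⟩ := exists_slicesIn_of_goodSubspaces (List.nodup_append.1 hnd).2.1 h₂ hw
      have hdisj := (LTree.disjoint_descFinset_of_nodup hnd).mono_right
        (LTree.descFinset_subset_of_mem_subtrees hw)
      exact ⟨W, hWr, (hW.mulSpan_right hdisj U₁).mono hle⟩

variable (d)

noncomputable instance (S : Finset (Fin n)) : Module.Finite 𝕜 (TSpace 𝕜 d S) :=
  inferInstanceAs (Module.Finite 𝕜 ((∀ i : {i // i ∈ S}, Fin (d i.1)) → 𝕜))

noncomputable def colSpace (S : Finset (Fin n)) (t : (∀ i, Fin (d i)) → 𝕜) :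
    Submodule 𝕜 (TSpace 𝕜 d S) :=
  Submodule.span 𝕜 (Set.range (flattening d S t)ᵀ)

theorem finrank_colSpace (S : Finset (Fin n)) (t : (∀ i, Fin (d i)) → 𝕜) :
    Module.finrank 𝕜 (colSpace d S t) = flatteningRank d S t :=
  (Matrix.rank_eq_finrank_span_cols _).symm

theorem transpose_flattening_mem_colSpace (S : Finset (Fin n)) (t : (∀ i, Fin (d i)) → 𝕜)
    (b : ∀ i : {i // i ∉ S}, Fin (d i.1)) : (flattening d S t)ᵀ b ∈ colSpace d S t :=
  Submodule.subset_span ⟨b, rfl⟩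

theorem flatteningRank_le_finrank {S : Finset (Fin n)} {t : (∀ i, Fin (d i)) → 𝕜}
    {W : Submodule 𝕜 (TSpace 𝕜 d S)} (h : ∀ b, (flattening d S t)ᵀ b ∈ W) :
    flatteningRank d S t ≤ Module.finrank 𝕜 W := by
  rw [← finrank_colSpace]
  exact Submodule.finrank_mono (Submodule.span_le.2 (Set.range_subset_iff.2 h))

theorem slice_transpose_flattening_mem_colSpace {S S' : Finset (Fin n)} (hS : S' ⊆ S)
    (t : (∀ i, Fin (d i)) → 𝕜) (c : ∀ i : {i // i ∈ S \ S'}, Fin (d i.1))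
    (b : ∀ i : {i // i ∉ S}, Fin (d i.1)) :
    slice d c ((flattening d S t)ᵀ b) ∈ colSpace d S' t := by
  have hcol : slice d c ((flattening d S t)ᵀ b) = (flattening d S' t)ᵀ
      fun i => if h : i.1 ∈ S then c ⟨i.1, Finset.mem_sdiff.2 ⟨h, i.2⟩⟩ else b ⟨i.1, h⟩ := by
    funext a
    refine congrArg t (funext fun i => ?_)
    by_cases h' : i ∈ S'
    · simp [h', hS h']
    · by_cases h : i ∈ S <;> simp [h, h']
  exact hcol ▸ transpose_flattening_mem_colSpace d S' t _

theorem mem_mulSpan_of_forall_slice_mem {S₁ S₂ : Finset (Fin n)} (hd : Disjoint S₁ S₂)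
    {U₁ : Submodule 𝕜 (TSpace 𝕜 d S₁)} {U₂ : Submodule 𝕜 (TSpace 𝕜 d S₂)}
    {x : TSpace 𝕜 d (S₁ ∪ S₂)} (h₁ : ∀ c, slice d c x ∈ U₁) (h₂ : ∀ c, slice d c x ∈ U₂) :
    x ∈ mulSpan d U₁ U₂ := by
  let M : (∀ i : {i // i ∈ S₁}, Fin (d i.1)) → (∀ i : {i // i ∈ S₂}, Fin (d i.1)) → 𝕜 :=
    fun a₁ a₂ => x fun i => if h : i.1 ∈ S₁ then a₁ ⟨i.1, h⟩
      else a₂ ⟨i.1, (Finset.mem_union.1 i.2).resolve_left h⟩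
  have hcol : ∀ a₂, (fun a₁ => M a₁ a₂) ∈ U₁ := fun a₂ =>
    h₁ fun i => a₂ ⟨i.1, (Finset.mem_union.1 (Finset.mem_sdiff.1 i.2).1).resolve_left
      (Finset.mem_sdiff.1 i.2).2⟩
  have hrow : ∀ a₁, M a₁ ∈ U₂ := fun a₁ => by
    let c : ∀ i : {i // i ∈ (S₁ ∪ S₂) \ S₂}, Fin (d i.1) := fun i =>
      a₁ ⟨i.1, (Finset.mem_union.1 (Finset.mem_sdiff.1 i.2).1).resolve_right
        (Finset.mem_sdiff.1 i.2).2⟩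
    have hM : M a₁ = slice d c x := by
      funext a₂
      refine congrArg x (funext fun i => ?_)
      by_cases h : i.1 ∈ S₂
      · simp [h, Finset.disjoint_right.1 hd h]
      · simp [h, c, (Finset.mem_union.1 i.2).resolve_right h]
    exact hM ▸ h₂ c
  obtain ⟨k, f, g, hf, hg, hM⟩ := exists_sum_mul_of_cols_mem_of_rows_mem hcol hrow
  have hx : x = ∑ j, combine d (f j) (g j) := by
    funext a
    refine (congrArg x (funext fun i => ?_)).trans
      ((hM _ _).trans
        (Finset.sum_apply (M := fun _ => 𝕜) a Finset.univ fun j => combine d (f j) (g j)).symm)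
    split_ifs <;> rfl
  rw [hx]
  exact Submodule.sum_mem _ fun j _ => Submodule.subset_span ⟨f j, hf j, g j, hg j, rfl⟩

theorem colSpace_union_le_mulSpan {S₁ S₂ : Finset (Fin n)} (hd : Disjoint S₁ S₂)
    (t : (∀ i, Fin (d i)) → 𝕜) :
    colSpace d (S₁ ∪ S₂) t ≤ mulSpan d (colSpace d S₁ t) (colSpace d S₂ t) := by
  refine Submodule.span_le.2 (Set.range_subset_iff.2 fun b => ?_)
  exact mem_mulSpan_of_forall_slice_mem d hd
    (fun c => slice_transpose_flattening_mem_colSpace d Finset.subset_union_left t c b)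
    (fun c => slice_transpose_flattening_mem_colSpace d Finset.subset_union_right t c b)

theorem goodSubspaces_colSpace (t : (∀ i, Fin (d i)) → 𝕜) : ∀ {v : LTree (Fin n)},
    v.leafList.Nodup → (∀ w ∈ v.subtrees, flatteningRank d w.descFinset t ≤ r) →
    goodSubspaces d r v (colSpace d v.descFinset t)
  | .leaf _, _, h => (finrank_colSpace d _ t).trans_le (h _ rfl)
  | .node _ _, hnd, h =>
      ⟨(finrank_colSpace d _ t).trans_le (h _ (Or.inl (Or.inl rfl))), _, _,
        goodSubspaces_colSpace t (List.nodup_append.1 hnd).1 fun w hw => h w (Or.inl (Or.inr hw)),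
        goodSubspaces_colSpace t (List.nodup_append.1 hnd).2.1 fun w hw => h w (Or.inr hw),
        colSpace_union_le_mulSpan d (LTree.disjoint_descFinset_of_nodup hnd) t⟩

end Flattening

/-- Equivalence of the two definitions of the variety of tensor network states: a tensor
`t` admits a system of subspaces `U_v` of dimension at most `r` (with `U_l ⊆ V_l` at the
leaves, `U_v ⊆ U_{v₁} ⊗ U_{v₂}` at the nodes, and `t ∈ U_root`) if and only if for every
vertex `v` the flattening rank of `t` with respect to the leaf-descendants of `v` is at
most `r`. -/
theorem stmt_18 {𝕜 : Type*} [Field 𝕜] {n : ℕ} (d : Fin n → ℕ) (r : ℕ)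
    (T : LTree (Fin n)) (hnodup : T.leafList.Nodup)
    (hall : T.descFinset = Finset.univ)
    (t : (∀ i, Fin (d i)) → 𝕜) :
    (∃ U : Submodule 𝕜 (TSpace 𝕜 d T.descFinset),
        goodSubspaces d r T U ∧
        (fun v : ∀ i : {i // i ∈ T.descFinset}, Fin (d i.1) =>
            t fun i => v ⟨i, by simp [hall]⟩) ∈ U) ↔
      ∀ v ∈ T.subtrees, flatteningRank d v.descFinset t ≤ r := by
  constructor
  · rintro ⟨U, hU, ht⟩ w hw
    obtain ⟨W, hWr, hW⟩ := exists_slicesIn_of_goodSubspaces hnodup hU hw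
    -- each column of the flattening at `w` is, definitionally, a slice of `t`
    exact (flatteningRank_le_finrank d fun b =>
      hW _ ht fun i => b ⟨i.1, (Finset.mem_sdiff.1 i.2).2⟩).trans hWr
  · intro h
    refine ⟨colSpace d T.descFinset t, goodSubspaces_colSpace d t hnodup h, ?_⟩
    have hmem : ∀ j, j ∈ T.descFinset := by simp [hall]
    convert transpose_flattening_mem_colSpace d T.descFinset t fun i => absurd (hmem i.1) i.2
      using 1
    funext v
    exact congrArg t (funext fun j => by rw [dif_pos (hmem j)])
end

section
/- Hackbusch's conjecture: for every k ≥ 1 and r ≥ 2, and for every permutation σ of {1, …, 2^k} (ordering of the leaves of the train-track tree), there exists a tensor t ∈ V₁ ⊗ ⋯ ⊗ V_{2^k} (with dim V_i ≥ r) such that the flattening rank of t with respect to every dyadic interval of {1,…,2^k} is at most r, yet for some 1 ≤ j ≤ 2^k the flattening rank of t with respect to {σ(1), …, σ(j)} is at least r^{⌈k/2⌉}. (Hence HF(r,k) ⊄ TT(r^{⌈k/2⌉} − 1, 2^k) for any leaf ordering.) -/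
open Finset Function

theorem Submodule.finrank_mul_le {K A : Type*} [Field K] [CommRing A] [Algebra K A]
    (U V : Submodule K A) [FiniteDimensional K U] [FiniteDimensional K V] :
    Module.finrank K ↥(U * V) ≤ Module.finrank K U * Module.finrank K V := by
  set u : Fin (Module.finrank K U) → A := fun i => Module.finBasis K U i
  set v : Fin (Module.finrank K V) → A := fun i => Module.finBasis K V i
  have span_finBasis : ∀ W : Submodule K A, [FiniteDimensional K W] →
      span K (Set.range fun i => (Module.finBasis K W i : A)) = W := fun W _ => by
    rw [Set.range_comp' Subtype.val, ← W.coe_subtype, Submodule.span_image,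
      (Module.finBasis K W).span_eq, Submodule.map_top, Submodule.range_subtype]
  calc Module.finrank K ↥(U * V)
      = Set.finrank K (Set.range fun p : Fin _ × Fin _ => u p.1 * v p.2) := by
        rw [Set.finrank, ← Set.image2_range, Set.image2_mul, ← Submodule.span_mul_span,
          span_finBasis, span_finBasis]
    _ ≤ _ := (finrank_range_le_card _).trans_eq (by simp)

open scoped Matrix in
theorem Matrix.rank_hadamard_le {K m n : Type*} [Field K] [Fintype m] [Fintype n]
    (A B : Matrix m n K) : (A ⊙ B).rank ≤ A.rank * B.rank := by
  simp only [Matrix.rank_eq_finrank_span_cols]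
  refine (Submodule.finrank_mono ?_).trans (Submodule.finrank_mul_le _ _)
  rw [Submodule.span_le]
  rintro _ ⟨j, rfl⟩
  exact Submodule.mul_mem_mul (Submodule.subset_span ⟨j, rfl⟩) (Submodule.subset_span ⟨j, rfl⟩)

section Flattening

variable {𝕜 : Type*} [Field 𝕜] {ι : Type*} [Fintype ι] [DecidableEq ι] (d : ι → ℕ)
  (S : Finset ι)

theorem flatteningRank_le_card_of_eq_sum_mul {W : Type*} [Fintype W]
    {t : (∀ i, Fin (d i)) → 𝕜} (u : W → (∀ i : {i // i ∈ S}, Fin (d i.1)) → 𝕜)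
    (v : W → (∀ i : {i // i ∉ S}, Fin (d i.1)) → 𝕜)
    (h : ∀ a b, flattening d S t a b = ∑ w, u w a * v w b) :
    flatteningRank d S t ≤ Fintype.card W := by
  have hfactor :
      flattening d S t = Matrix.of (fun a w => u w a) * Matrix.of (fun w b => v w b) := by
    ext a b
    simp [h, Matrix.mul_apply]
  rw [flatteningRank, hfactor]
  exact (Matrix.rank_mul_le_left _ _).trans (Matrix.rank_le_card_width _)

theorem flatteningRank_mul_le (t₁ t₂ : (∀ i, Fin (d i)) → 𝕜) :
    flatteningRank d S (t₁ * t₂) ≤ flatteningRank d S t₁ * flatteningRank d S t₂ :=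
  Matrix.rank_hadamard_le (flattening d S t₁) (flattening d S t₂)

theorem flatteningRank_one_le : flatteningRank d S (1 : (∀ i, Fin (d i)) → 𝕜) ≤ 1 :=
  flatteningRank_le_card_of_eq_sum_mul (W := Unit) d S (fun _ _ => 1) (fun _ _ => 1)
    (fun _ _ => by simp [flattening])

theorem flatteningRank_prod_le {α : Type*} (s : Finset α) (t : α → (∀ i, Fin (d i)) → 𝕜) :
    flatteningRank d S (∏ a ∈ s, t a) ≤ ∏ a ∈ s, flatteningRank d S (t a) :=
  Finset.le_prod_of_submultiplicative _ (flatteningRank_one_le d S) (flatteningRank_mul_le d S)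
    s t

end Flattening

noncomputable def liftIndex {ι α : Type*} [Fintype α] [DecidableEq ι] (d : ι → ℕ) {r : ℕ}
    (hr : 0 < r) (hd : ∀ l, r ≤ d l) {P : ι → Prop} (p : α → ι) (v : α → Fin r)
    (l : {l // P l}) : Fin (d l.1) :=
  ⟨if h : ∃ a, p a = l.1 then v h.choose else 0, by
    split_ifs <;> [exact (Fin.is_lt _).trans_le (hd l.1); exact hr.trans_le (hd l.1)]⟩

theorem liftIndex_apply {ι α : Type*} [Fintype α] [DecidableEq ι] (d : ι → ℕ) {r : ℕ}
    (hr : 0 < r) (hd : ∀ l, r ≤ d l) {P : ι → Prop} {p : α → ι} (hp : Injective p)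
    (v : α → Fin r) (a : α) (h : P (p a)) :
    (liftIndex d hr hd p v ⟨p a, h⟩ : ℕ) = v a := by
  have hex : ∃ a', p a' = p a := ⟨a, rfl⟩
  simp only [liftIndex, dif_pos hex, hp hex.choose_spec]

section PairTensor

variable {𝕜 : Type*} [Field 𝕜] {ι : Type*} [Fintype ι] [DecidableEq ι] (d : ι → ℕ)
  (S : Finset ι) (r : ℕ)

/-- `∑_{w < r} e_w ⊗ e_w` on the factors `a` and `b`, tensored with the all-ones vectors of the
other factors. -/
def pairIdentity (a b : ι) : (∀ i, Fin (d i)) → 𝕜 :=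
  fun x => ∑ w : Fin r, (if (x a : ℕ) = w then 1 else 0) * (if (x b : ℕ) = w then 1 else 0)

theorem flatteningRank_pairIdentity_le (a b : ι) :
    flatteningRank d S (pairIdentity (𝕜 := 𝕜) d r a b) ≤
      if (a ∈ S ↔ b ∈ S) then 1 else r := by
  by_cases ha : a ∈ S <;> by_cases hb : b ∈ S
  · rw [if_pos (iff_of_true ha hb)]
    exact (flatteningRank_le_card_of_eq_sum_mul (W := Unit) d S
      (fun _ x => pairIdentity (𝕜 := 𝕜) (fun i : {i // i ∈ S} => d i.1) r ⟨a, ha⟩ ⟨b, hb⟩ x)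
      (fun _ _ => 1) (fun _ _ => by simp [flattening, pairIdentity, ha, hb])).trans_eq rfl
  · rw [if_neg fun h => hb (h.mp ha)]
    exact (flatteningRank_le_card_of_eq_sum_mul d S
      (fun (w : Fin r) x => if (x ⟨a, ha⟩ : ℕ) = w then (1 : 𝕜) else 0)
      (fun w y => if (y ⟨b, hb⟩ : ℕ) = w then (1 : 𝕜) else 0)
      (fun _ _ => by simp [flattening, pairIdentity, ha, hb])).trans_eq
        (Fintype.card_fin r)
  · rw [if_neg fun h => ha (h.mpr hb)]
    exact (flatteningRank_le_card_of_eq_sum_mul d S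
      (fun (w : Fin r) x => if (x ⟨b, hb⟩ : ℕ) = w then (1 : 𝕜) else 0)
      (fun w y => if (y ⟨a, ha⟩ : ℕ) = w then (1 : 𝕜) else 0)
      (fun _ _ => by simp [flattening, pairIdentity, ha, hb, mul_comm])).trans_eq
        (Fintype.card_fin r)
  · rw [if_pos (iff_of_false ha hb)]
    exact (flatteningRank_le_card_of_eq_sum_mul (W := Unit) d S (fun _ _ => 1)
      (fun _ y => pairIdentity (𝕜 := 𝕜) (fun i : {i // i ∉ S} => d i.1) r ⟨a, ha⟩ ⟨b, hb⟩ y)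
      (fun _ _ => by simp [flattening, pairIdentity, ha, hb])).trans_eq rfl

variable {α : Type*} [Fintype α]

def pairTensor (p q : α → ι) : (∀ i, Fin (d i)) → 𝕜 :=
  ∏ a, pairIdentity d r (p a) (q a)

theorem flatteningRank_pairTensor_le (p q : α → ι) :
    flatteningRank d S (pairTensor (𝕜 := 𝕜) d r p q) ≤
      r ^ #{a | ¬(p a ∈ S ↔ q a ∈ S)} := by
  calc flatteningRank d S (pairTensor (𝕜 := 𝕜) d r p q)
      ≤ ∏ a, if (p a ∈ S ↔ q a ∈ S) then 1 else r :=
        (flatteningRank_prod_le d S _ _).trans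
          (Finset.prod_le_prod' fun a _ => flatteningRank_pairIdentity_le d S r (p a) (q a))
    _ = r ^ #{a | ¬(p a ∈ S ↔ q a ∈ S)} := by
        rw [Finset.prod_ite, Finset.prod_const_one, one_mul, Finset.prod_const]

theorem pow_card_le_flatteningRank_pairTensor (hr : 0 < r) (hd : ∀ l, r ≤ d l) {p q : α → ι}
    (hp : Injective p) (hq : Injective q) (hpS : ∀ a, p a ∈ S) (hqS : ∀ a, q a ∉ S) :
    r ^ Fintype.card α ≤ flatteningRank d S (pairTensor (𝕜 := 𝕜) d r p q) := by
  classical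
  have hsub : (flattening d S (pairTensor (𝕜 := 𝕜) d r p q)).submatrix
      (liftIndex d hr hd p) (liftIndex d hr hd q) = 1 := by
    ext v v'
    simp [flattening, pairTensor, pairIdentity, hpS, hqS, liftIndex_apply d hr hd hp,
      liftIndex_apply d hr hd hq, Matrix.one_apply, Fin.val_inj, Finset.prod_boole,
      funext_iff]
  calc r ^ Fintype.card α = Fintype.card (α → Fin r) := by simp
    _ = (1 : Matrix (α → Fin r) (α → Fin r) 𝕜).rank := Matrix.rank_one.symm
    _ ≤ flatteningRank d S (pairTensor (𝕜 := 𝕜) d r p q) :=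
        hsub ▸ Matrix.rank_submatrix_le _ _ _

end PairTensor

def dyadicBlock (s M : ℕ) : Set ℕ := Set.Ico (M * 2 ^ s) ((M + 1) * 2 ^ s)

theorem mem_dyadicBlock {s M x : ℕ} : x ∈ dyadicBlock s M ↔ x / 2 ^ s = M := by
  have hpos : 0 < 2 ^ s := by positivity
  rw [dyadicBlock, Set.mem_Ico, Nat.div_eq_iff hpos, add_mul, one_mul]
  omega

theorem dyadicBlock_subset_of_le {s t M N x : ℕ} (hst : s ≤ t) (hs : x ∈ dyadicBlock s M)
    (ht : x ∈ dyadicBlock t N) : dyadicBlock s M ⊆ dyadicBlock t N := by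
  obtain ⟨c, rfl⟩ := Nat.exists_eq_add_of_le hst
  intro y hy
  simp only [mem_dyadicBlock, pow_add, ← Nat.div_div_eq_div_mul] at hs ht hy ⊢
  rw [hy, ← hs, ht]

theorem dyadicBlock_subset_or_subset {s t M N x : ℕ} (hs : x ∈ dyadicBlock s M)
    (ht : x ∈ dyadicBlock t N) :
    dyadicBlock s M ⊆ dyadicBlock t N ∨ dyadicBlock t N ⊆ dyadicBlock s M :=
  (le_total s t).imp (dyadicBlock_subset_of_le · hs ht) (dyadicBlock_subset_of_le · ht hs)

theorem dyadicBlock_zero (M : ℕ) : dyadicBlock 0 M = {M} := by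
  ext x
  simp [mem_dyadicBlock]

theorem Finset.Nontrivial.exists_min_lt_max_image {β α : Type*} [LinearOrder α] {s : Finset β}
    (hs : s.Nontrivial) {g : β → α} (hg : Set.InjOn g s) :
    ∃ x ∈ s, ∃ y ∈ s, g x < g y ∧ ∀ z ∈ s, g x ≤ g z ∧ g z ≤ g y := by
  obtain ⟨x, hx, hmin⟩ := s.exists_min_image g hs.nonempty
  obtain ⟨y, hy, hmax⟩ := s.exists_max_image g hs.nonempty
  refine ⟨x, hx, y, hy, lt_of_not_ge fun hyx => ?_, fun z hz => ⟨hmin z hz, hmax z hz⟩⟩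
  obtain ⟨a, ha, b, hb, hab⟩ := hs
  have hga : g a = g x := ((hmax a ha).trans hyx).antisymm (hmin a ha)
  have hgb : g b = g x := ((hmax b hb).trans hyx).antisymm (hmin b hb)
  exact hab (hg ha hb (hga.trans hgb.symm))

section Pairing

variable {n : ℕ} {α : Type*} [LinearOrder α] (g : Fin n → α)

def Separates (B : Set ℕ) (pr : Fin n × Fin n) : Prop := ¬((pr.1 : ℕ) ∈ B ↔ (pr.2 : ℕ) ∈ B)

structure IsDyadicPairing (m M : ℕ) (J : α) (P : Finset (Fin n × Fin n)) : Prop where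
  mem_block : ∀ pr ∈ P, (pr.1 : ℕ) ∈ dyadicBlock m M ∧ (pr.2 : ℕ) ∈ dyadicBlock m M
  lt_le : ∀ pr ∈ P, g pr.1 < J ∧ J ≤ g pr.2
  eq_of_separates : ∀ s N, ∀ pr ∈ P, ∀ pr' ∈ P,
    Separates (dyadicBlock s N) pr → Separates (dyadicBlock s N) pr' → pr = pr'

theorem isDyadicPairing_singleton {m M : ℕ} {x y : Fin n} (hx : (x : ℕ) ∈ dyadicBlock m M)
    (hy : (y : ℕ) ∈ dyadicBlock m M) (hxy : g x < g y) :
    IsDyadicPairing g m M (g y) {(x, y)} where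
  mem_block := by simpa using ⟨hx, hy⟩
  lt_le := by simpa using hxy
  eq_of_separates _ _ := by simp

variable {g}

theorem IsDyadicPairing.insert {t m N M : ℕ} {J : α} {P : Finset (Fin n × Fin n)}
    (hP : IsDyadicPairing g t N J P) (hne : P.Nonempty)
    (hNM : dyadicBlock t N ⊆ dyadicBlock m M) {x y : Fin n}
    (hx : (x : ℕ) ∈ dyadicBlock m M \ dyadicBlock t N)
    (hy : (y : ℕ) ∈ dyadicBlock m M \ dyadicBlock t N)
    (hxy : ∀ z : Fin n, (z : ℕ) ∈ dyadicBlock m M → g x ≤ g z ∧ g z ≤ g y) :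
    IsDyadicPairing g m M J (insert (x, y) P) where
  mem_block := by
    rw [Finset.forall_mem_insert]
    exact ⟨⟨hx.1, hy.1⟩, fun pr hpr => (hP.mem_block pr hpr).imp (hNM ·) (hNM ·)⟩
  lt_le := by
    obtain ⟨pr, hpr⟩ := hne
    obtain ⟨hlt, hle⟩ := hP.lt_le pr hpr
    obtain ⟨h₁, h₂⟩ := hP.mem_block pr hpr
    rw [Finset.forall_mem_insert]
    exact ⟨⟨(hxy _ (hNM h₁)).1.trans_lt hlt, hle.trans (hxy _ (hNM h₂)).2⟩, hP.lt_le⟩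
  eq_of_separates s N' := by
    have not_both : ∀ pr ∈ P, Separates (dyadicBlock s N') (x, y) →
        ¬Separates (dyadicBlock s N') pr := by
      intro pr hpr hsep hsep'
      obtain ⟨h₁, h₂⟩ := hP.mem_block pr hpr
      obtain ⟨z, hzD, hzQ⟩ : ∃ z, z ∈ dyadicBlock s N' ∧ z ∈ dyadicBlock t N := by
        by_cases hz : (pr.1 : ℕ) ∈ dyadicBlock s N'
        · exact ⟨_, hz, h₁⟩
        · exact ⟨_, not_not.mp fun h => hsep' (iff_of_false hz h), h₂⟩
      rcases dyadicBlock_subset_or_subset hzD hzQ with hDQ | hQD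
      · exact hsep (iff_of_false (fun h => hx.2 (hDQ h)) (fun h => hy.2 (hDQ h)))
      · exact hsep' (iff_of_true (hQD h₁) (hQD h₂))
    simp only [Finset.mem_insert]
    rintro pr (rfl | hpr) pr' (rfl | hpr') hsep hsep'
    · rfl
    · exact (not_both pr' hpr' hsep hsep').elim
    · exact (not_both pr hpr hsep' hsep).elim
    · exact hP.eq_of_separates s N' pr hpr pr' hpr' hsep hsep'

theorem IsDyadicPairing.separates_singleton {m M : ℕ} {J : α} {P : Finset (Fin n × Fin n)}
    (hP : IsDyadicPairing g m M J P) {pr : Fin n × Fin n} (hpr : pr ∈ P) :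
    Separates (dyadicBlock 0 pr.1) pr ∧ Separates (dyadicBlock 0 pr.2) pr := by
  have hne : (pr.1 : ℕ) ≠ pr.2 := fun h =>
    (hP.lt_le pr hpr).1.not_ge (Fin.val_injective h ▸ (hP.lt_le pr hpr).2)
  simp [Separates, dyadicBlock_zero, hne, hne.symm]

theorem IsDyadicPairing.injOn_fst {m M : ℕ} {J : α} {P : Finset (Fin n × Fin n)}
    (hP : IsDyadicPairing g m M J P) : Set.InjOn Prod.fst (P : Set (Fin n × Fin n)) :=
  fun pr hpr pr' hpr' h =>
  hP.eq_of_separates 0 pr.1 pr hpr pr' hpr' (hP.separates_singleton hpr).1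
    (h ▸ (hP.separates_singleton hpr').1)

theorem IsDyadicPairing.injOn_snd {m M : ℕ} {J : α} {P : Finset (Fin n × Fin n)}
    (hP : IsDyadicPairing g m M J P) : Set.InjOn Prod.snd (P : Set (Fin n × Fin n)) :=
  fun pr hpr pr' hpr' h =>
  hP.eq_of_separates 0 pr.2 pr hpr pr' hpr' (hP.separates_singleton hpr).2
    (h ▸ (hP.separates_singleton hpr').2)

theorem IsDyadicPairing.card_separates_le_one {m M : ℕ} {J : α} {P : Finset (Fin n × Fin n)}
    (hP : IsDyadicPairing g m M J P) {s N : ℕ} {S : Finset (Fin n)}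
    (hS : ∀ l : Fin n, l ∈ S ↔ (l : ℕ) ∈ dyadicBlock s N) :
    #{a : P | ¬(a.1.1 ∈ S ↔ a.1.2 ∈ S)} ≤ 1 := by
  refine Finset.card_le_one.mpr fun a ha b hb => Subtype.ext ?_
  simp only [Finset.mem_filter, Finset.mem_univ, true_and, hS] at ha hb
  exact hP.eq_of_separates s N a.1 a.2 b.1 b.2 ha hb

theorem nontrivial_filter_div_two_pow_eq {m M : ℕ} (hm : 1 ≤ m) (hM : (M + 1) * 2 ^ m ≤ n) :
    ({z : Fin n | (z : ℕ) / 2 ^ m = M} : Finset (Fin n)).Nontrivial := by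
  have h2 : 2 ≤ 2 ^ m := by
    calc 2 = 2 ^ 1 := rfl
      _ ≤ 2 ^ m := Nat.pow_le_pow_right two_pos hm
  rw [add_mul, one_mul] at hM
  refine ⟨⟨M * 2 ^ m, by omega⟩, Finset.mem_filter.mpr ⟨Finset.mem_univ _, ?_⟩,
    ⟨M * 2 ^ m + 1, by omega⟩, Finset.mem_filter.mpr ⟨Finset.mem_univ _, ?_⟩, by simp⟩
  · exact Nat.mul_div_cancel M (by omega)
  · show (M * 2 ^ m + 1) / 2 ^ m = M
    exact Nat.div_eq_of_lt_le (by omega) (by rw [add_mul]; omega)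

theorem exists_isDyadicPairing (hg : Injective g) {m : ℕ} (hm : 1 ≤ m) {M : ℕ}
    (hM : (M + 1) * 2 ^ m ≤ n) :
    ∃ P J, P.card = (m + 1) / 2 ∧ IsDyadicPairing g m M J P := by
  induction m using Nat.strong_induction_on generalizing M with
  | _ m ih =>
  obtain ⟨x, hx, y, hy, hgxy, hext⟩ :=
    (nontrivial_filter_div_two_pow_eq hm hM).exists_min_lt_max_image hg.injOn
  simp only [Finset.mem_filter, Finset.mem_univ, true_and, ← mem_dyadicBlock] at hx hy hext
  by_cases hm2 : m ≤ 2
  · exact ⟨{(x, y)}, g y, by simp; omega, isDyadicPairing_singleton g hx hy hgxy⟩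
  -- the quarter of the block containing neither `x` nor `y` hosts the remaining pairs
  obtain ⟨u, hu, hxu, hyu⟩ :
      ∃ u < 4, 4 * M + u ≠ x / 2 ^ (m - 2) ∧ 4 * M + u ≠ y / 2 ^ (m - 2) := by
    by_contra! h
    have := h 0; have := h 1; have := h 2; have := h 3
    omega
  have hpow : 2 ^ m = 2 ^ (m - 2) * 4 := (pow_sub_mul_pow 2 (by omega : 2 ≤ m)).symm
  obtain ⟨P, J, hcard, hP⟩ := ih (m - 2) (by omega) (by omega) (M := 4 * M + u) (by
    calc (4 * M + u + 1) * 2 ^ (m - 2) ≤ (4 * M + 4) * 2 ^ (m - 2) :=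
          Nat.mul_le_mul_right _ (by omega)
      _ = (M + 1) * 2 ^ m := by rw [hpow]; ring
      _ ≤ n := hM)
  have hsub : dyadicBlock (m - 2) (4 * M + u) ⊆ dyadicBlock m M := by
    intro z hz
    rw [mem_dyadicBlock] at hz ⊢
    rw [hpow, ← Nat.div_div_eq_div_mul, hz]
    omega
  have hxQ : (x : ℕ) ∉ dyadicBlock (m - 2) (4 * M + u) := mem_dyadicBlock.not.mpr hxu.symm
  have hyQ : (y : ℕ) ∉ dyadicBlock (m - 2) (4 * M + u) := mem_dyadicBlock.not.mpr hyu.symm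
  have hne : P.Nonempty := Finset.card_pos.mp (by omega)
  refine ⟨insert (x, y) P, J, ?_, hP.insert hne hsub ⟨hx, hxQ⟩ ⟨hy, hyQ⟩ hext⟩
  rw [Finset.card_insert_of_notMem fun h => hxQ (hP.mem_block _ h).1, hcard]
  omega

end Pairing

/-- Leaves are indexed by `Fin (2^k)`, zero-based: the dyadic interval `{m·2^s + 1, …, (m+1)·2^s}`
becomes `{i | m·2^s ≤ i < (m+1)·2^s}` and the σ-initial segment `{σ(1), …, σ(j)}` becomes
`{σ(0), …, σ(j−1)} = {l | σ⁻¹(l) < j}`. -/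
theorem stmt_19 {𝕜 : Type*} [Field 𝕜] (k r : ℕ) (hk : 1 ≤ k) (hr : 2 ≤ r)
    (d : Fin (2 ^ k) → ℕ) (hd : ∀ i, r ≤ d i)
    (σ : Equiv.Perm (Fin (2 ^ k))) :
    ∃ t : (∀ i, Fin (d i)) → 𝕜,
      (∀ m s : ℕ, (m + 1) * 2 ^ s ≤ 2 ^ k →
        flatteningRank d (Finset.univ.filter fun i : Fin (2 ^ k) =>
          m * 2 ^ s ≤ (i : ℕ) ∧ (i : ℕ) < (m + 1) * 2 ^ s) t ≤ r) ∧
      ∃ j : ℕ, 1 ≤ j ∧ j ≤ 2 ^ k ∧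
        r ^ ((k + 1) / 2) ≤
          flatteningRank d (Finset.univ.filter fun l : Fin (2 ^ k) =>
            ((σ.symm l : ℕ) < j)) t := by
  obtain ⟨P, J, hcard, hP⟩ :=
    exists_isDyadicPairing σ.symm.injective hk (M := 0) (by simp)
  obtain ⟨pr, hpr⟩ := Finset.card_pos.mp (show 0 < #P by omega)
  refine ⟨pairTensor d r (fun a : P => a.1.1) (fun a => a.1.2), fun m s _ => ?_,
    J, (Nat.zero_le _).trans_lt (hP.lt_le pr hpr).1, J.is_lt.le, ?_⟩
  · calc _ ≤ r ^ 1 := (flatteningRank_pairTensor_le d _ r _ _).trans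
          (Nat.pow_le_pow_right (by omega)
            (hP.card_separates_le_one (s := s) (N := m) fun l => by simp [dyadicBlock]))
      _ = r := pow_one r
  · rw [← hcard, ← Fintype.card_coe]
    exact pow_card_le_flatteningRank_pairTensor d _ r (by omega) hd hP.injOn_fst.injective
      hP.injOn_snd.injective (fun a => by simpa using (hP.lt_le a.1 a.2).1)
      (fun a => by simpa using (hP.lt_le a.1 a.2).2)
end
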